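/- arXiv:1210.8395 — 6 statements merged into one kernel-verified Lean document; each statement's English description precedes it below -/
import Mathlib

section
/- For all m, n ≥ 1 with (m,n) ≠ (1,1), the treewidth of the n×m two-dimensional planar grid graph equals min{m,n}. -/
open SimpleGraph

/-- A tree decomposition of `G` with tree `T` and bags `B`. -/
def IsTreeDecomp {V I : Type} (G : SimpleGraph V) (T : SimpleGraph I)
    (B : I → Finset V) : Prop :=
  T.IsTree ∧
  (∀ v : V, ∃ i : I, v ∈ B i) ∧
  (∀ u v : V, G.Adj u v → ∃ i : I, u ∈ B i ∧ v ∈ B i) ∧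
  (∀ v : V, (T.induce {i : I | v ∈ B i}).Connected)

/-- The treewidth of `G`: the least `k` such that `G` has a tree decomposition
all of whose bags have at most `k + 1` vertices (i.e. width at most `k`). -/
noncomputable def treewidth {V : Type} (G : SimpleGraph V) : ℕ :=
  sInf {k : ℕ | ∃ (I : Type) (T : SimpleGraph I) (B : I → Finset V),
    IsTreeDecomp G T B ∧ ∀ i : I, (B i).card ≤ k + 1}

/-- `H` is a minor of `G`: branch sets are nonempty (connectedness includes
nonemptiness), induce connected subgraphs, are pairwise disjoint, and every
edge of `H` is realized by an edge of `G` between the corresponding branch sets. -/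
def IsMinor {V W : Type} (H : SimpleGraph V) (G : SimpleGraph W) : Prop :=
  ∃ φ : V → Set W,
    (∀ v : V, (G.induce (φ v)).Connected) ∧
    (∀ u v : V, u ≠ v → Disjoint (φ u) (φ v)) ∧
    (∀ u v : V, H.Adj u v → ∃ a ∈ φ u, ∃ b ∈ φ v, G.Adj a b)

/-- The `n × m` two-dimensional grid graph: vertices `(i, j)` are adjacent iff
they differ by exactly 1 in one coordinate and agree in the other. -/
def gridGraph (n m : ℕ) : SimpleGraph (Fin n × Fin m) :=
  SimpleGraph.fromRel (fun p q =>
    (p.1 = q.1 ∧ p.2.val + 1 = q.2.val) ∨ (p.2 = q.2 ∧ p.1.val + 1 = q.1.val))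

/-- The hardware graph `F(m, c)`: an `m × m` grid of `K_{c,c}` unit cells.
A vertex `(a, b, d)` lies in cell `(a, b)`; it is on the left half if `d < c`
and the right half otherwise.  Left and right halves of a cell are completely
joined; left-half vertices are joined to their images in the cell directly
below; right-half vertices are joined to their images in the cell to the right. -/
def hardwareGraph (m c : ℕ) : SimpleGraph (Fin m × Fin m × Fin (2 * c)) :=
  SimpleGraph.fromRel (fun x y =>
    (x.1 = y.1 ∧ x.2.1 = y.2.1 ∧ x.2.2.val < c ∧ c ≤ y.2.2.val) ∨
    (x.2.1 = y.2.1 ∧ x.2.2 = y.2.2 ∧ x.2.2.val < c ∧ x.1.val + 1 = y.1.val) ∨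
    (x.1 = y.1 ∧ x.2.2 = y.2.2 ∧ c ≤ x.2.2.val ∧ x.2.1.val + 1 = y.2.1.val))

/-!
For the upper bound, list the cells row by row: neighbouring cells are at most `m` apart in this
order, so the windows of `m + 1` consecutive cells, strung along a path, form a tree
decomposition of width `m`.

For the lower bound (when `m ≤ n`), the last row, the last column without its bottom cell, and
the crosses (a row plus a column) of the remaining `(n - 1) × (m - 1)` block form a bramble:
connected sets that pairwise meet or are joined by an edge. The nodes whose bags meet a bramble
set form a subtree; these subtrees pairwise intersect, so by the Helly property of subtrees some
bag meets every bramble set. Such a bag needs a cell of the last row, a different cell of the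
last column, and `m - 1` cells of the block, since fewer would leave a row and a column of the
block free and hence a cross unmet. Transposing handles `m > n`.
-/

namespace SimpleGraph

variable {V : Type*} {G : SimpleGraph V}

lemma Connected.induce_range {W : Type*} {H : SimpleGraph W} (hH : H.Connected) (f : H →g G) :
    (G.induce (Set.range f)).Connected :=
  hH.map ⟨fun w => ⟨f w, w, rfl⟩, f.map_adj⟩ (by rintro ⟨_, w, rfl⟩; exact ⟨w, rfl⟩)

lemma induce_iUnion_connected_of_adj {ι : Type*} {H : SimpleGraph ι} (hH : H.Connected)
    {S : ι → Set V} (hS : ∀ k, (G.induce (S k)).Connected)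
    (hadj : ∀ k l, H.Adj k l → (S k ∩ S l).Nonempty) :
    (G.induce (⋃ k, S k)).Connected := by
  have reach : ∀ {k l} (_ : H.Walk k l) (a b : ↥(⋃ k, S k)), a.1 ∈ S k → b.1 ∈ S l →
      (G.induce (⋃ k, S k)).Reachable a b := by
    intro k l w
    induction w with
    | nil =>
      rintro ⟨a, _⟩ ⟨b, _⟩ ha hb
      exact ((hS _).preconnected ⟨a, ha⟩ ⟨b, hb⟩).map
        (induceHomOfLE G (Set.subset_iUnion S _)).toHom
    | cons hkl _ ih =>
      intro a b ha hb
      obtain ⟨c, hck, hcl⟩ := hadj _ _ hkl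
      let c' : ↥(⋃ k, S k) := ⟨c, Set.mem_iUnion_of_mem _ hck⟩
      exact (((hS _).preconnected ⟨a.1, ha⟩ ⟨c, hck⟩).map
        (induceHomOfLE G (Set.subset_iUnion S _)).toHom).trans (ih c' b hcl hb)
  obtain ⟨k⟩ := hH.nonempty
  obtain ⟨⟨a, ha⟩⟩ := (hS k).nonempty
  have : Nonempty ↥(⋃ k, S k) := ⟨⟨a, Set.mem_iUnion_of_mem k ha⟩⟩
  refine ⟨fun a b => ?_⟩
  obtain ⟨k, hk⟩ := Set.mem_iUnion.mp a.2
  obtain ⟨l, hl⟩ := Set.mem_iUnion.mp b.2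
  exact reach (hH.preconnected k l).some a b hk hl

lemma Walk.exists_walk_to_first_mem {u v : V} (p : G.Walk u v) {P : Set V} (hv : v ∈ P) :
    ∃ w ∈ P, ∃ q : G.Walk u w, (∀ x ∈ q.support, x ∈ p.support) ∧
      ∀ x ∈ q.support, x ∈ P → x = w := by
  induction p with
  | nil => exact ⟨_, hv, .nil, by simp, by simp⟩
  | @cons u c v h p ih =>
    by_cases hu : u ∈ P
    · exact ⟨u, hu, .nil, by simp, by simp⟩
    obtain ⟨w, hw, q, hqp, hqP⟩ := ih hv
    refine ⟨w, hw, .cons h q, fun x hx => ?_, fun x hx hxP => ?_⟩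
    · rw [Walk.support_cons, List.mem_cons] at hx ⊢
      exact hx.imp_right (hqp x)
    · rw [Walk.support_cons, List.mem_cons] at hx
      exact hx.elim (fun hxu => absurd (hxu ▸ hxP) hu) (hqP x · hxP)

lemma Walk.IsPath.append_of_support_inter {u v w : V} {q : G.Walk u v} {p : G.Walk v w}
    (hq : q.IsPath) (hp : p.IsPath) (h : ∀ x ∈ q.support, x ∈ p.support → x = v) :
    (q.append p).IsPath := by
  rw [Walk.isPath_def, Walk.support_append]
  have hp' := hp.support_nodup
  rw [← Walk.cons_tail_support] at hp'
  refine List.Nodup.append hq.support_nodup hp'.of_cons fun x hxq hxp => ?_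
  obtain rfl := h x hxq (List.mem_of_mem_tail hxp)
  exact (List.nodup_cons.mp hp').1 hxp

variable {I : Type*} {T : SimpleGraph I}

lemma IsAcyclic.support_subset_of_connected_induce (hT : T.IsAcyclic) {S : Set I}
    (hS : (T.induce S).Connected) {a b : I} (ha : a ∈ S) (hb : b ∈ S) {p : T.Walk a b}
    (hp : p.IsPath) : ∀ x ∈ p.support, x ∈ S := by
  classical
  obtain ⟨w⟩ := hS.preconnected ⟨a, ha⟩ ⟨b, hb⟩
  let w' := w.map (Embedding.induce S).toHom
  have hpw : p = w'.bypass :=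
    congrArg Subtype.val ((hT.subsingleton_path a b).elim ⟨p, hp⟩ ⟨_, w'.bypass_isPath⟩)
  intro x hx
  rw [hpw] at hx
  have hx' := w'.support_bypass_subset_support hx
  rw [Walk.support_map, List.mem_map] at hx'
  obtain ⟨y, -, rfl⟩ := hx'
  exact y.2

lemma IsTree.induce_inter_connected (hT : T.IsTree) {S S' : Set I} (hS : (T.induce S).Connected)
    (hS' : (T.induce S').Connected) (h : (S ∩ S').Nonempty) :
    (T.induce (S ∩ S')).Connected := by
  obtain ⟨u, hu⟩ := h
  refine induce_connected_of_patches u hu fun {v} hv => ?_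
  obtain ⟨p, hp, -⟩ := hT.existsUnique_path u v
  refine ⟨{x | x ∈ p.support}, fun x hx => ⟨?_, ?_⟩, p.start_mem_support, p.end_mem_support,
    p.connected_induce_support.preconnected _ _⟩
  · exact hT.isAcyclic.support_subset_of_connected_induce hS hu.1 hv.1 hp x hx
  · exact hT.isAcyclic.support_subset_of_connected_induce hS' hu.2 hv.2 hp x hx

lemma IsTree.inter_inter_nonempty (hT : T.IsTree) {A B C : Set I} (hA : (T.induce A).Connected)
    (hB : (T.induce B).Connected) (hC : (T.induce C).Connected) (hAB : (A ∩ B).Nonempty)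
    (hBC : (B ∩ C).Nonempty) (hCA : (C ∩ A).Nonempty) : (A ∩ B ∩ C).Nonempty := by
  classical
  obtain ⟨x, hxA, hxB⟩ := hAB
  obtain ⟨y, hyB, hyC⟩ := hBC
  obtain ⟨z, hzC, hzA⟩ := hCA
  obtain ⟨p, hp, -⟩ := hT.existsUnique_path x y
  obtain ⟨q, hq, -⟩ := hT.existsUnique_path z x
  -- `m` is the median of `x`, `y`, `z`: where the path from `z` to `x` first meets `p`.
  obtain ⟨m, hmp, q₁, hq₁q, hq₁p⟩ := q.exists_walk_to_first_mem (P := {v | v ∈ p.support})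
    p.start_mem_support
  have hr : (q₁.bypass.append (p.dropUntil m hmp)).IsPath :=
    q₁.bypass_isPath.append_of_support_inter (hp.dropUntil hmp) fun v hv hv' =>
      hq₁p v (q₁.support_bypass_subset_support hv) (p.support_dropUntil_subset_support hmp hv')
  refine ⟨m, ⟨?_, ?_⟩, ?_⟩
  · exact hT.isAcyclic.support_subset_of_connected_induce hA hzA hxA hq m
      (hq₁q m q₁.end_mem_support)
  · exact hT.isAcyclic.support_subset_of_connected_induce hB hxB hyB hp m hmp
  · exact hT.isAcyclic.support_subset_of_connected_induce hC hzC hyC hr m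
      ((Walk.mem_support_append_iff _ _).mpr (Or.inl (Walk.end_mem_support _)))

lemma IsTree.exists_mem_of_pairwise_inter_nonempty (hT : T.IsTree) {F : Set (Set I)}
    (hF : F.Finite) (hconn : ∀ S ∈ F, (T.induce S).Connected)
    (hpair : F.Pairwise fun S S' => (S ∩ S').Nonempty) : ∃ i, ∀ S ∈ F, i ∈ S := by
  suffices key : ∀ A, (T.induce A).Connected → (∀ S ∈ F, (A ∩ S).Nonempty) →
      ∃ i ∈ A, ∀ S ∈ F, i ∈ S by
    obtain ⟨i, -, hi⟩ := key Set.univ ((induceUnivIso T).connected_iff.mpr hT.connected)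
      fun S hS => by rw [Set.univ_inter]; exact Set.nonempty_coe_sort.mp (hconn S hS).nonempty
    exact ⟨i, hi⟩
  induction F, hF using Set.Finite.induction_on with
  | empty =>
    intro A hA _
    obtain ⟨⟨a, ha⟩⟩ := hA.nonempty
    exact ⟨a, ha, by simp⟩
  | @insert S₀ F hS₀F _ ih =>
    intro A hA hAF
    have hS₀ := hconn S₀ (Set.mem_insert _ _)
    have hAS₀ := hAF S₀ (Set.mem_insert _ _)
    obtain ⟨i, ⟨hiA, hiS₀⟩, hiF⟩ := ih (fun S hS => hconn S (Set.mem_insert_of_mem _ hS))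
      (hpair.mono (Set.subset_insert _ _)) (A ∩ S₀) (hT.induce_inter_connected hA hS₀ hAS₀)
      fun S hS => hT.inter_inter_nonempty hA hS₀ (hconn S (Set.mem_insert_of_mem _ hS)) hAS₀
        (hpair (Set.mem_insert _ _) (Set.mem_insert_of_mem _ hS)
          (ne_of_mem_of_not_mem hS hS₀F).symm)
        (Set.inter_comm _ _ ▸ hAF S (Set.mem_insert_of_mem _ hS))
    exact ⟨i, hiA, Set.forall_mem_insert.mpr ⟨hiS₀, hiF⟩⟩

lemma hasse_nat_mem_edges_of_le_of_lt {a : ℕ} :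
    ∀ {x y : ℕ} (p : (hasse ℕ).Walk x y), x ≤ a → a < y → s(a, a + 1) ∈ p.edges := by
  intro x y p
  induction p with
  | nil => omega
  | @cons x x' y h p ih =>
    intro hx hy
    rw [Walk.edges_cons, List.mem_cons]
    by_cases hx' : x' ≤ a
    · exact Or.inr (ih hx' hy)
    · rw [hasse_adj, Nat.covBy_iff_add_one_eq, Nat.covBy_iff_add_one_eq] at h
      obtain ⟨rfl, rfl⟩ : x = a ∧ x' = a + 1 := by omega
      exact Or.inl rfl

lemma isTree_hasse_nat : (hasse ℕ).IsTree := by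
  refine ⟨⟨hasse_preconnected_of_succ ℕ⟩, isAcyclic_iff_forall_adj_isBridge.mpr fun v w h => ?_⟩
  rw [hasse_adj, Nat.covBy_iff_add_one_eq, Nat.covBy_iff_add_one_eq] at h
  obtain rfl | rfl := h
  on_goal 2 => rw [Sym2.eq_swap]
  all_goals exact isBridge_iff_forall_walk_mem_edges.mpr fun p =>
    hasse_nat_mem_edges_of_le_of_lt p le_rfl (Nat.lt_succ_self _)

lemma induce_hasse_nat_connected {s : Set ℕ} (hs : s.OrdConnected) (hne : s.Nonempty) :
    ((hasse ℕ).induce s).Connected := by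
  have : Nonempty s := hne.to_subtype
  refine ⟨fun ⟨a, ha⟩ ⟨b, hb⟩ => ?_⟩
  wlog hab : a ≤ b generalizing a b
  · exact (this b hb a ha (le_of_not_ge hab)).symm
  induction b, hab using Nat.le_induction with
  | base => rfl
  | succ b hab ih =>
    have hb' : b ∈ s := hs.out ha hb ⟨hab, b.le_succ⟩
    have hadj : ((hasse ℕ).induce s).Adj ⟨b, hb'⟩ ⟨b + 1, hb⟩ := by simp [hasse_adj]
    exact (ih hb').trans hadj.reachable

def Touches (G : SimpleGraph V) (X Y : Set V) : Prop :=
  ∃ x ∈ X, ∃ y ∈ Y, x = y ∨ G.Adj x y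

def IsBramble (G : SimpleGraph V) (𝓑 : Set (Set V)) : Prop :=
  (∀ X ∈ 𝓑, (G.induce X).Connected) ∧ 𝓑.Pairwise G.Touches

lemma Touches.symm {G : SimpleGraph V} {X Y : Set V} (h : G.Touches X Y) : G.Touches Y X := by
  obtain ⟨x, hx, y, hy, hxy⟩ := h
  exact ⟨y, hy, x, hx, hxy.imp Eq.symm Adj.symm⟩

end SimpleGraph

section TreeDecomp

variable {V I : Type} {G : SimpleGraph V} {T : SimpleGraph I} {B : I → Finset V}

lemma IsTreeDecomp.induce_iUnion_connected (hd : IsTreeDecomp G T B) {X : Set V}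
    (hX : (G.induce X).Connected) : (T.induce (⋃ v : X, {i | (v : V) ∈ B i})).Connected :=
  induce_iUnion_connected_of_adj hX (fun v => hd.2.2.2 v) fun u v huv => by
    obtain ⟨i, hu, hv⟩ := hd.2.2.1 u v huv
    exact ⟨i, hu, hv⟩

lemma IsTreeDecomp.exists_bag_meets_of_isBramble (hd : IsTreeDecomp G T B) {𝓑 : Set (Set V)}
    (h𝓑 : G.IsBramble 𝓑) (hfin : 𝓑.Finite) : ∃ i, ∀ X ∈ 𝓑, ∃ v ∈ X, v ∈ B i := by
  let trace (X : Set V) : Set I := ⋃ v : X, {i | (v : V) ∈ B i}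
  have hmeet {X Y : Set V} (h : G.Touches X Y) : (trace X ∩ trace Y).Nonempty := by
    obtain ⟨x, hx, y, hy, rfl | hxy⟩ := h
    · obtain ⟨i, hi⟩ := hd.2.1 x
      exact ⟨i, Set.mem_iUnion.mpr ⟨⟨x, hx⟩, hi⟩, Set.mem_iUnion.mpr ⟨⟨x, hy⟩, hi⟩⟩
    · obtain ⟨i, hxi, hyi⟩ := hd.2.2.1 x y hxy
      exact ⟨i, Set.mem_iUnion.mpr ⟨⟨x, hx⟩, hxi⟩, Set.mem_iUnion.mpr ⟨⟨y, hy⟩, hyi⟩⟩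
  obtain ⟨i, hi⟩ := hd.1.exists_mem_of_pairwise_inter_nonempty (hfin.image trace)
    (Set.forall_mem_image.mpr fun X hX => hd.induce_iUnion_connected (h𝓑.1 X hX))
    (by
      rintro _ ⟨X, hX, rfl⟩ _ ⟨Y, hY, rfl⟩ hXY
      exact hmeet (h𝓑.2 hX hY fun h => hXY (h ▸ rfl)))
  refine ⟨i, fun X hX => ?_⟩
  obtain ⟨⟨v, hv⟩, hvi⟩ := Set.mem_iUnion.mp (hi _ (Set.mem_image_of_mem trace hX))
  exact ⟨v, hv, hvi⟩

lemma IsTreeDecomp.of_iso {W : Type} {H : SimpleGraph W} (e : G ≃g H) {B : I → Finset W}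
    (hd : IsTreeDecomp H T B) : IsTreeDecomp G T fun i => (B i).map e.symm.toEquiv.toEmbedding := by
  have hmem (v : V) (i : I) : v ∈ (B i).map e.symm.toEquiv.toEmbedding ↔ e v ∈ B i :=
    Finset.mem_map_equiv
  refine ⟨hd.1, fun v => ?_, fun u v huv => ?_, fun v => ?_⟩
  · obtain ⟨i, hi⟩ := hd.2.1 (e v)
    exact ⟨i, (hmem v i).mpr hi⟩
  · obtain ⟨i, hu, hv⟩ := hd.2.2.1 _ _ (e.map_adj_iff.mpr huv)
    exact ⟨i, (hmem u i).mpr hu, (hmem v i).mpr hv⟩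
  · have hset : {i | v ∈ (B i).map e.symm.toEquiv.toEmbedding} = {i | e v ∈ B i} :=
      Set.ext (hmem v)
    exact hset ▸ hd.2.2.2 (e v)

lemma SimpleGraph.Iso.treewidth_eq {W : Type} {H : SimpleGraph W} (e : G ≃g H) :
    treewidth G = treewidth H := by
  unfold treewidth
  congr! 3 with k
  constructor
  · rintro ⟨I, T, B, hd, hB⟩
    exact ⟨I, T, _, hd.of_iso e.symm, by simpa using hB⟩
  · rintro ⟨I, T, B, hd, hB⟩
    exact ⟨I, T, _, hd.of_iso e, by simpa using hB⟩

lemma treewidth_eq_of_bounds {k : ℕ}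
    (hup : ∃ (I : Type) (T : SimpleGraph I) (B : I → Finset V),
      IsTreeDecomp G T B ∧ ∀ i, (B i).card ≤ k + 1)
    (hlow : ∀ (I : Type) (T : SimpleGraph I) (B : I → Finset V),
      IsTreeDecomp G T B → ∃ i, k + 1 ≤ (B i).card) :
    treewidth G = k :=
  IsLeast.csInf_eq ⟨hup, fun k' ⟨I, T, B, hd, hB⟩ => by
    obtain ⟨i, hi⟩ := hlow I T B hd
    have := hB i
    omega⟩

end TreeDecomp

section Layout

open Function

variable {V : Type} {G : SimpleGraph V} (f : V → ℕ) (hf : Injective f) (k : ℕ)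

noncomputable def layoutBag (t : ℕ) : Finset V :=
  (Finset.Icc t (t + k)).preimage f hf.injOn

variable {f k}

lemma mem_layoutBag {t : ℕ} {v : V} : v ∈ layoutBag f hf k t ↔ t ≤ f v ∧ f v ≤ t + k := by
  simp [layoutBag]

lemma card_layoutBag_le (t : ℕ) : (layoutBag f hf k t).card ≤ k + 1 := by
  classical
  calc (layoutBag f hf k t).card ≤ (Finset.Icc t (t + k)).card := by
        rw [layoutBag, Finset.card_preimage]
        exact Finset.card_filter_le _ _
    _ = k + 1 := by rw [Nat.card_Icc]; omega

lemma isTreeDecomp_layoutBag (hk : ∀ u v, G.Adj u v → f v ≤ f u + k) :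
    IsTreeDecomp G (hasse ℕ) (layoutBag f hf k) := by
  refine ⟨isTree_hasse_nat, fun v => ⟨f v, by simp [mem_layoutBag]⟩, fun u v huv => ?_,
    fun v => induce_hasse_nat_connected ⟨fun a ha b hb c hc => ?_⟩ ⟨f v, by simp [mem_layoutBag]⟩⟩
  · have := hk u v huv
    have := hk v u huv.symm
    exact ⟨min (f u) (f v), (mem_layoutBag hf).mpr (by omega), (mem_layoutBag hf).mpr (by omega)⟩
  · simp only [Set.mem_ofPred_eq, mem_layoutBag] at ha hb ⊢
    obtain ⟨hac, hcb⟩ := hc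
    omega

end Layout

lemma Finset.min_card_le_card_of_forall_exists_eq_or_eq {γ α β : Type*} {H : Finset γ}
    {r : γ → α} {c : γ → β} {R : Finset α} {C : Finset β}
    (h : ∀ i ∈ R, ∀ j ∈ C, ∃ v ∈ H, r v = i ∨ c v = j) : min R.card C.card ≤ H.card := by
  classical
  by_contra! hlt
  obtain ⟨i, hiR, hi⟩ := Finset.exists_mem_notMem_of_card_lt_card
    (Finset.card_image_le.trans_lt (lt_min_iff.mp hlt).1 : (H.image r).card < R.card)
  obtain ⟨j, hjC, hj⟩ := Finset.exists_mem_notMem_of_card_lt_card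
    (Finset.card_image_le.trans_lt (lt_min_iff.mp hlt).2 : (H.image c).card < C.card)
  obtain ⟨v, hv, hvi | hvj⟩ := h i hiR j hjC
  · exact hi (hvi ▸ Finset.mem_image_of_mem r hv)
  · exact hj (hvj ▸ Finset.mem_image_of_mem c hv)

section Grid

variable {n m : ℕ}

lemma gridGraph_adj {p q : Fin n × Fin m} : (gridGraph n m).Adj p q ↔
    p.1 = q.1 ∧ (p.2.val + 1 = q.2.val ∨ q.2.val + 1 = p.2.val) ∨
      p.2 = q.2 ∧ (p.1.val + 1 = q.1.val ∨ q.1.val + 1 = p.1.val) := by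
  simp only [gridGraph, fromRel_adj, ne_eq, Prod.ext_iff, Fin.ext_iff]
  omega

lemma gridGraph_isTreeDecomp_layoutBag :
    IsTreeDecomp (gridGraph n m) (hasse ℕ)
      (layoutBag (fun p => (finProdFinEquiv p : ℕ))
        (Fin.val_injective.comp finProdFinEquiv.injective) m) := by
  refine isTreeDecomp_layoutBag _ fun p q hpq => ?_
  simp only [finProdFinEquiv_apply_val]
  rcases gridGraph_adj.mp hpq with ⟨h1, h2⟩ | ⟨h1, h2⟩
  · rw [h1]; omega
  · have := Nat.mul_le_mul_left m (show (q.1 : ℕ) ≤ p.1 + 1 by omega)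
    rw [h1, mul_add, mul_one] at *
    omega

def gridRowSeg (n m i c : ℕ) : Set (Fin n × Fin m) := {p | p.1.val = i ∧ p.2.val < c}

def gridColSeg (n m j r : ℕ) : Set (Fin n × Fin m) := {p | p.2.val = j ∧ p.1.val < r}

lemma gridRowSeg_connected {i c : ℕ} (hi : i < n) (hc : 0 < c) (hcm : c ≤ m) :
    ((gridGraph n m).induce (gridRowSeg n m i c)).Connected := by
  obtain ⟨c, rfl⟩ : ∃ c', c = c' + 1 := ⟨c - 1, by omega⟩
  have hrange : gridRowSeg n m i (c + 1) =
      Set.range fun k : Fin (c + 1) => ((⟨i, hi⟩, Fin.castLE hcm k) : Fin n × Fin m) := by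
    ext ⟨a, b⟩
    simp only [gridRowSeg, Set.mem_ofPred_eq, Set.mem_range, Prod.ext_iff, Fin.ext_iff,
      Fin.val_castLE]
    exact ⟨fun h => ⟨⟨b, by omega⟩, h.1.symm, rfl⟩, fun ⟨k, hk, hkb⟩ => ⟨hk.symm, hkb ▸ k.2⟩⟩
  rw [hrange]
  exact (pathGraph_connected c).induce_range
    ⟨_, fun h => gridGraph_adj.mpr (Or.inl ⟨rfl, (pathGraph_adj.mp h :)⟩)⟩

lemma gridColSeg_connected {j r : ℕ} (hj : j < m) (hr : 0 < r) (hrn : r ≤ n) :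
    ((gridGraph n m).induce (gridColSeg n m j r)).Connected := by
  obtain ⟨r, rfl⟩ : ∃ r', r = r' + 1 := ⟨r - 1, by omega⟩
  have hrange : gridColSeg n m j (r + 1) =
      Set.range fun k : Fin (r + 1) => ((Fin.castLE hrn k, ⟨j, hj⟩) : Fin n × Fin m) := by
    ext ⟨a, b⟩
    simp only [gridColSeg, Set.mem_ofPred_eq, Set.mem_range, Prod.ext_iff, Fin.ext_iff,
      Fin.val_castLE]
    exact ⟨fun h => ⟨⟨a, by omega⟩, rfl, h.1.symm⟩, fun ⟨k, hka, hk⟩ => ⟨hk.symm, hka ▸ k.2⟩⟩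
  rw [hrange]
  exact (pathGraph_connected r).induce_range
    ⟨_, fun h => gridGraph_adj.mpr (Or.inr ⟨rfl, (pathGraph_adj.mp h :)⟩)⟩

def gridBramble (n m : ℕ) : Set (Set (Fin n × Fin m)) :=
  insert (gridRowSeg n m (n - 1) m) <| insert (gridColSeg n m (m - 1) (n - 1))
    {X | ∃ i < n - 1, ∃ j < m - 1, X = gridRowSeg n m i (m - 1) ∪ gridColSeg n m j (n - 1)}

lemma gridBramble_isBramble (hn : 2 ≤ n) (hm : 1 ≤ m) :
    (gridGraph n m).IsBramble (gridBramble n m) := by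
  have both {X Y} (h : (gridGraph n m).Touches X Y) := And.intro h h.symm
  refine ⟨?_, ?_⟩
  · rintro X (rfl | rfl | ⟨i, hi, j, hj, rfl⟩)
    · exact gridRowSeg_connected (by omega) (by omega) le_rfl
    · exact gridColSeg_connected (by omega) (by omega) (by omega)
    · exact induce_union_connected (gridRowSeg_connected (by omega) (by omega) (by omega)).1
        (gridColSeg_connected (by omega) (by omega) (by omega)).1
        ⟨(⟨i, by omega⟩, ⟨j, by omega⟩), ⟨rfl, by dsimp only; omega⟩, ⟨rfl, by dsimp only; omega⟩⟩
  rw [gridBramble, Set.pairwise_insert, Set.pairwise_insert]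
  refine ⟨⟨?_, ?_⟩, ?_⟩
  · rintro _ ⟨i, hi, j, hj, rfl⟩ _ ⟨i', hi', j', hj', rfl⟩ -
    exact ⟨(⟨i, by omega⟩, ⟨j', by omega⟩), Or.inl ⟨rfl, hj'⟩, _, Or.inr ⟨rfl, hi⟩, Or.inl rfl⟩
  · rintro _ ⟨i, hi, j, hj, rfl⟩ -
    refine both ⟨(⟨i, by omega⟩, ⟨m - 1, by omega⟩), ⟨rfl, hi⟩,
      (⟨i, by omega⟩, ⟨m - 2, by omega⟩), Or.inl ⟨rfl, by dsimp only; omega⟩, Or.inr ?_⟩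
    exact gridGraph_adj.mpr (Or.inl ⟨rfl, Or.inr (by dsimp only; omega)⟩)
  · rintro _ (rfl | ⟨i, hi, j, hj, rfl⟩) -
    · refine both ⟨(⟨n - 1, by omega⟩, ⟨m - 1, by omega⟩), ⟨rfl, by dsimp only; omega⟩,
        (⟨n - 2, by omega⟩, ⟨m - 1, by omega⟩), ⟨rfl, by dsimp only; omega⟩, Or.inr ?_⟩
      exact gridGraph_adj.mpr (Or.inr ⟨rfl, Or.inr (by dsimp only; omega)⟩)
    · refine both ⟨(⟨n - 1, by omega⟩, ⟨j, by omega⟩), ⟨rfl, by dsimp only; omega⟩,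
        (⟨n - 2, by omega⟩, ⟨j, by omega⟩), Or.inr ⟨rfl, by dsimp only; omega⟩, Or.inr ?_⟩
      exact gridGraph_adj.mpr (Or.inr ⟨rfl, Or.inr (by dsimp only; omega)⟩)

lemma le_card_of_meets_gridBramble (hmn : m ≤ n) {H : Finset (Fin n × Fin m)}
    (hH : ∀ X ∈ gridBramble n m, ∃ v ∈ X, v ∈ H) : m + 1 ≤ H.card := by
  classical
  obtain ⟨p, ⟨hp₁, -⟩, hpH⟩ := hH _ (Set.mem_insert _ _)
  obtain ⟨q, ⟨hq₂, hq₁⟩, hqH⟩ := hH _ (Set.mem_insert_of_mem _ (Set.mem_insert _ _))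
  let H' := H.filter fun v => v.1.val < n - 1 ∧ v.2.val < m - 1
  have hH' : min (n - 1) (m - 1) ≤ H'.card := by
    simpa using Finset.min_card_le_card_of_forall_exists_eq_or_eq (H := H')
      (r := fun v => v.1.val) (c := fun v => v.2.val) (R := Finset.range (n - 1))
      (C := Finset.range (m - 1)) fun i hi j hj => by
        rw [Finset.mem_range] at hi hj
        obtain ⟨v, hv, hvH⟩ := hH _ (Set.mem_insert_of_mem _ (Set.mem_insert_of_mem _
          ⟨i, hi, j, hj, rfl⟩))
        refine ⟨v, Finset.mem_filter.mpr ⟨hvH, ?_⟩, ?_⟩ <;>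
          simp only [gridRowSeg, gridColSeg, Set.mem_union, Set.mem_ofPred_eq] at hv <;> omega
  have hsub : insert p (insert q H') ⊆ H :=
    Finset.insert_subset hpH (Finset.insert_subset hqH (Finset.filter_subset _ _))
  have hpq : p ≠ q := fun h => by rw [h] at hp₁; omega
  have hcard := Finset.card_le_card hsub
  rw [Finset.card_insert_of_notMem (by simp [H', hpq, hp₁]),
    Finset.card_insert_of_notMem (by simp [H', hq₂])] at hcard
  omega

end Grid

def gridGraphSwapIso (n m : ℕ) : gridGraph n m ≃g gridGraph m n where
  toEquiv := Equiv.prodComm _ _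
  map_rel_iff' := by
    intro p q
    simp only [Equiv.prodComm_apply, gridGraph_adj, Prod.fst_swap, Prod.snd_swap]
    tauto

lemma treewidth_gridGraph_of_le {n m : ℕ} (hn : 2 ≤ n) (hm : 1 ≤ m) (hmn : m ≤ n) :
    treewidth (gridGraph n m) = m :=
  treewidth_eq_of_bounds ⟨ℕ, hasse ℕ, _, gridGraph_isTreeDecomp_layoutBag, card_layoutBag_le _⟩
    fun _ _ _ hd => by
      obtain ⟨i, hi⟩ :=
        hd.exists_bag_meets_of_isBramble (gridBramble_isBramble hn hm) (Set.toFinite _)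
      exact ⟨i, le_card_of_meets_gridBramble hmn hi⟩

/-- For all `m, n ≥ 1` with `(m, n) ≠ (1, 1)`, the treewidth of the `n × m`
two-dimensional planar grid graph equals `min m n`. -/
theorem treewidth_gridGraph (m n : ℕ) (hm : 1 ≤ m) (hn : 1 ≤ n)
    (h : (m, n) ≠ (1, 1)) :
    treewidth (gridGraph n m) = min m n := by
  have h' : m ≠ 1 ∨ n ≠ 1 := by rwa [Ne, Prod.mk.injEq, not_and_or] at h
  rcases le_total m n with hmn | hnm
  · rw [min_eq_left hmn]
    exact treewidth_gridGraph_of_le (by omega) hm hmn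
  · rw [min_eq_right hnm, Iso.treewidth_eq (gridGraphSwapIso n m)]
    exact treewidth_gridGraph_of_le (by omega) hn hnm
end

section
/- For every m ≥ 1 and c ≥ 1, the treewidth of the hardware graph F(m,c) is at most cm + c − 1: τ(F(m,c)) ≤ cm + c − 1; equivalently, F(m,c) admits a tree decomposition of width cm + c − 1. -/
/-!
The bags sweep the grid row by row. The spine of the tree is the path of nodes `(a, b, false)`
in lexicographic order, and the bag of `(a, b, false)` is the staircase separator formed by the
left halves of the cells `(a, b), …, (a, m - 1)` and `(a + 1, 0), …, (a + 1, b)`. From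
`(a, 0, false)` hangs the path `(a, 0, true), …, (a, m - 1, true)`, whose bag at `(a, b, true)`
holds the left halves of `(a, b), …, (a, m - 1)` and the right halves of `(a, b - 1)` and
`(a, b)`; these bags cover the edges inside the cells and the horizontal edges of row `a`.
Every bag consists of at most `m + 1` half-cells of `c` vertices each.

The tree is given by a parent function along which a height strictly decreases; the bags
containing a fixed vertex are then connected because they are closed under taking parents,
except at one top node.
-/

open SimpleGraph

section ParentGraph

variable {I : Type*} {p : I → I}

def parentGraph (p : I → I) : SimpleGraph I := fromRel fun i j => p i = j

lemma parentGraph_adj {i j : I} : (parentGraph p).Adj i j ↔ i ≠ j ∧ (p i = j ∨ p j = i) :=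
  fromRel_adj _ _ _

variable (h : I → ℕ) (hh : ∀ i, p i ≠ i → h (p i) < h i)
include hh

lemma parentGraph_induce_connected {s : Set I} {w : I} (hw : w ∈ s)
    (hs : ∀ i ∈ s, i ≠ w → p i ∈ s ∧ p i ≠ i) :
    ((parentGraph p).induce s).Connected := by
  let T := (parentGraph p).induce s
  have reach (i : I) : ∀ hi : i ∈ s, T.Reachable ⟨w, hw⟩ ⟨i, hi⟩ := by
    induction i using (measure h).wf.induction with
    | _ i ih =>
      intro hi
      by_cases hiw : i = w
      · subst hiw; rfl
      obtain ⟨hpi, hne⟩ := hs i hi hiw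
      have hadj : T.Adj ⟨p i, hpi⟩ ⟨i, hi⟩ :=
        parentGraph_adj.2 ⟨hne, Or.inr rfl⟩
      exact (ih _ (hh i hne) hpi).trans hadj.reachable
  exact (connected_iff_exists_forall_reachable _).2 ⟨⟨w, hw⟩, fun ⟨i, hi⟩ => reach i hi⟩

lemma parentGraph_isTree [Finite I] {r : I} (hr : ∀ i, p i = i ↔ i = r) :
    (parentGraph p).IsTree := by
  have hconn : (parentGraph p).Connected :=
    (induceUnivIso _).connected_iff.1 <| parentGraph_induce_connected h hh (Set.mem_univ r)
      fun i _ hi => ⟨trivial, mt (hr i).1 hi⟩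
  have hadj (i : {i // i ≠ r}) : (parentGraph p).Adj i (p i) :=
    parentGraph_adj.2 ⟨fun e => i.2 ((hr i).1 e.symm), Or.inl rfl⟩
  let toEdge : {i // i ≠ r} → (parentGraph p).edgeSet := fun i => ⟨s(i, p i), hadj i⟩
  have hbij : Function.Bijective toEdge := by
    constructor
    · intro i j e
      rcases Sym2.eq_iff.1 (congrArg Subtype.val e) with ⟨hij, -⟩ | ⟨hij, hji⟩
      · exact Subtype.ext hij
      · have hi := hh i (mt (hr i).1 i.2)
        have hj := hh j (mt (hr j).1 j.2)
        rw [hji] at hi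
        rw [← hij] at hj
        omega
    · rintro ⟨e, he⟩
      induction e using Sym2.ind with
      | _ x y =>
        obtain ⟨hxy, hx | hy⟩ := parentGraph_adj.1 he
        · exact ⟨⟨x, fun e => hxy (hx ▸ ((hr x).2 e).symm)⟩, by simp [toEdge, hx]⟩
        · exact ⟨⟨y, fun e => hxy (hy ▸ (hr y).2 e)⟩, by simp [toEdge, hy, Sym2.eq_swap]⟩
  classical
  rw [isTree_iff_connected_and_card, ← Nat.card_congr (Equiv.ofBijective _ hbij),
    ← Finite.card_option, Nat.card_congr (Equiv.optionSubtypeNe r)]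
  exact ⟨hconn, rfl⟩

end ParentGraph

namespace HardwareGraph

variable {m c : ℕ}

abbrev Node (m : ℕ) := Fin m × Fin m × Bool

abbrev Vertex (m c : ℕ) := Fin m × Fin m × Fin (2 * c)

def parent : Node m → Node m
  | (a, b, true) => if b.val = 0 then (a, b, false) else (a, ⟨b - 1, by omega⟩, true)
  | (a, b, false) =>
    if b.val ≠ 0 then (a, ⟨b - 1, by omega⟩, false)
    else if a.val ≠ 0 then
      (⟨a - 1, by omega⟩, ⟨m - 1, Nat.sub_one_lt_of_lt a.isLt⟩, false)
    else (a, b, false)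

def height : Node m → ℕ
  | (a, b, k) => 2 * (m * a + b) + k.toNat

def root (hm : 0 < m) : Node m := (⟨0, hm⟩, ⟨0, hm⟩, false)

lemma parent_eq_self_iff (hm : 0 < m) {i : Node m} : parent i = i ↔ i = root hm := by
  obtain ⟨a, b, _ | _⟩ := i <;> simp only [parent, root] <;> split_ifs <;>
    simp only [Prod.mk.injEq, Fin.ext_iff, Bool.false_eq_true, Bool.true_eq_false, and_true,
      and_false, true_and, true_iff, iff_false] <;> omega

lemma height_parent_lt {i : Node m} (hi : parent i ≠ i) : height (parent i) < height i := by
  obtain ⟨a, b, _ | _⟩ := i <;> simp only [parent] at hi ⊢ <;> split_ifs at hi ⊢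
  · simp only [height]; omega
  · have : m * (a - 1) + m = m * a := by rw [← Nat.mul_succ]; congr; omega
    simp only [height]; omega
  · exact absurd rfl hi
  · simp only [height, Bool.toNat_true, Bool.toNat_false]; omega
  · simp only [height]; omega

def bag (c : ℕ) : Node m → Finset (Vertex m c)
  | (a, b, false) =>
    {v | (v.2.2 : ℕ) < c ∧
      ((v.1 : ℕ) = a ∧ (b : ℕ) ≤ v.2.1 ∨ (v.1 : ℕ) = a + 1 ∧ (v.2.1 : ℕ) ≤ b)}
  | (a, b, true) =>
    {v | (v.1 : ℕ) = a ∧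
      ((v.2.2 : ℕ) < c ∧ (b : ℕ) ≤ v.2.1 ∨
        c ≤ (v.2.2 : ℕ) ∧ ((v.2.1 : ℕ) = b ∨ (v.2.1 : ℕ) + 1 = b))}

/-- The node closest to the root whose bag contains `v`. -/
def top (v : Vertex m c) : Node m :=
  if c ≤ v.2.2 then (v.1, v.2.1, true)
  else if v.1.val = 0 then (v.1, ⟨0, v.1.pos⟩, false)
  else (⟨v.1 - 1, by omega⟩, v.2.1, false)

lemma mem_bag_top (v : Vertex m c) : v ∈ bag c (top v) := by
  obtain ⟨a, b, d⟩ := v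
  simp only [top]
  split_ifs <;>
    simp only [bag, Finset.mem_filter, Finset.mem_univ, true_and, and_true, true_or] <;> omega

lemma mem_bag_parent_of_ne_top {v : Vertex m c} {i : Node m}
    (hv : v ∈ bag c i) (hi : i ≠ top v) : v ∈ bag c (parent i) ∧ parent i ≠ i := by
  obtain ⟨a', b', d⟩ := v
  obtain ⟨a, b, _ | _⟩ := i <;>
  simp only [bag, Finset.mem_filter, Finset.mem_univ, true_and] at hv <;>
  simp only [top] at hi <;> split_ifs at hi <;> simp only [parent] <;> split_ifs <;>
  simp only [bag, Finset.mem_filter, Finset.mem_univ, true_and, ne_eq, Prod.mk.injEq,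
    Fin.ext_iff, Bool.false_eq_true, Bool.true_eq_false, and_true, and_false,
    not_false_eq_true] at hi ⊢ <;>
  omega

lemma exists_mem_bag_of_adj {x y : Vertex m c}
    (h : (hardwareGraph m c).Adj x y) : ∃ i, x ∈ bag c i ∧ y ∈ bag c i := by
  obtain ⟨a, b, d⟩ := x
  obtain ⟨a', b', d'⟩ := y
  simp only [hardwareGraph, fromRel_adj, Fin.ext_iff] at h
  -- an edge inside a cell, a vertical and a horizontal edge, each in both orientations
  rcases h with ⟨-, (h | h | h) | (h | h | h)⟩ <;>
    [refine ⟨(a, b, true), ?_⟩; refine ⟨(a, b, false), ?_⟩; refine ⟨(a, b', true), ?_⟩;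
      refine ⟨(a, b, true), ?_⟩; refine ⟨(a', b, false), ?_⟩;
      refine ⟨(a, b, true), ?_⟩] <;>
    simp only [bag, Finset.mem_filter, Finset.mem_univ, true_and, and_true, true_or] <;> omega

lemma card_bag_le (i : Node m) : (bag c i).card ≤ (m + 1) * c := by
  -- `position v = (slot, index)`, the slot numbering the half-cells of the bag by `0, …, m`
  let position : Vertex m c → ℕ × ℕ := fun v =>
    (if (v.1 : ℕ) = i.1 ∧ (v.2.2 : ℕ) < c then v.2.1 + 1 else v.2.1,
      if (v.2.2 : ℕ) < c then v.2.2 else v.2.2 - c)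
  calc (bag c i).card ≤ (Finset.range (m + 1) ×ˢ Finset.range c).card := by
        refine Finset.card_le_card_of_injOn position ?_ ?_
        · rintro ⟨a', b', d⟩ -
          simp only [position, Finset.coe_product, Finset.coe_range, Set.mem_prod, Set.mem_Iio]
          split_ifs <;> omega
        · obtain ⟨a, b, _ | _⟩ := i <;>
            rintro ⟨a₁, b₁, d₁⟩ h₁ ⟨a₂, b₂, d₂⟩ h₂ e <;>
            simp only [position, bag, Finset.mem_coe, Finset.mem_filter, Finset.mem_univ, true_and,
              Prod.mk.injEq, Fin.ext_iff] at h₁ h₂ e ⊢ <;> split_ifs at e <;> omega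
    _ = (m + 1) * c := by simp

theorem isTreeDecomp_bag (hm : 0 < m) :
    IsTreeDecomp (hardwareGraph m c) (parentGraph parent) (bag c) :=
  ⟨parentGraph_isTree height (fun _ => height_parent_lt) (fun _ => parent_eq_self_iff hm),
    fun v => ⟨top v, mem_bag_top v⟩,
    fun _ _ => exists_mem_bag_of_adj,
    fun v => parentGraph_induce_connected height (fun _ => height_parent_lt) (mem_bag_top v)
      fun _ => mem_bag_parent_of_ne_top⟩

end HardwareGraph

/-- For every `m ≥ 1` and `c ≥ 1`, the treewidth of the hardware graph
`F(m, c)` is at most `c * m + c - 1`. -/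
theorem treewidth_hardwareGraph_le (m c : ℕ) (hm : 1 ≤ m) (hc : 1 ≤ c) :
    treewidth (hardwareGraph m c) ≤ c * m + c - 1 := by
  refine Nat.sInf_le ⟨_, _, _, HardwareGraph.isTreeDecomp_bag hm, fun i => ?_⟩
  have hcard := HardwareGraph.card_bag_le (c := c) i
  have : (m + 1) * c = c * m + c := by ring
  omega
end

section
/- For every m ≥ 1 and c ≥ 1, the complete graph K_{cm+c+1} is not a minor of the hardware graph F(m,c); consequently, no graph containing K_{cm+c+1} as a subgraph or as a minor is a minor of F(m,c). -/
open SimpleGraph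

/-- `H` embeds as a subgraph of `G`: an injective map preserving adjacency. -/
def IsSubgraphEmb {V W : Type} (H : SimpleGraph V) (G : SimpleGraph W) : Prop :=
  ∃ f : V → W, Function.Injective f ∧ ∀ u v : V, H.Adj u v → G.Adj (f u) (f v)

/-!
`F(m, c)` has a tree decomposition of width `c * (m + 1) - 1` over the comb, a path (the spine)
with a path (a column) hanging from each of its vertices: every vertex of `F(m, c)` is sent to a
connected set of comb vertices, adjacent vertices to intersecting sets, and every comb vertex lies
in at most `c * (m + 1)` of these sets. The branch sets of a `K_n` minor therefore give `n`
connected, pairwise intersecting sets of comb vertices. These have a common point: projecting to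
the spine, and then to the height along one column, turns them into pairwise intersecting intervals
of `ℕ`. The comb vertex they share lies in the sets of `n` distinct vertices of `F(m, c)`, one from
each branch set, so `n ≤ c * (m + 1)`.
-/

section Connectivity

variable {W X : Type} {G : SimpleGraph W} {T : SimpleGraph X}

lemma exists_adj_of_induce_preconnected {S R : Set X} (hS : (T.induce S).Preconnected)
    {x y : X} (hx : x ∈ S) (hy : y ∈ S) (hxR : x ∈ R) (hyR : y ∉ R) :
    ∃ a ∈ S, ∃ b ∈ S, a ∈ R ∧ b ∉ R ∧ T.Adj a b := by
  obtain ⟨p⟩ := hS ⟨x, hx⟩ ⟨y, hy⟩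
  obtain ⟨d, -, ha, hb⟩ := p.exists_boundary_dart {z | z.1 ∈ R} hxR hyR
  exact ⟨_, d.fst.2, _, d.snd.2, ha, hb, d.adj⟩

lemma ordConnected_image_of_induce_preconnected {h : X → ℕ}
    (hh : ∀ a b, T.Adj a b → h b ≤ h a + 1) {S : Set X} (hS : (T.induce S).Preconnected) :
    (h '' S).OrdConnected := by
  refine ⟨?_⟩
  rintro _ ⟨x, hx, rfl⟩ _ ⟨y, hy, rfl⟩ t ⟨hxt, hty⟩
  rcases hxt.eq_or_lt with hxt | hxt
  · exact ⟨x, hx, hxt⟩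
  obtain ⟨a, -, b, hb, ha, hbt, hab⟩ :=
    exists_adj_of_induce_preconnected (R := {z | h z < t}) hS hx hy hxt (not_lt.2 hty)
  exact ⟨b, hb, by have := hh a b hab; simp only [Set.mem_ofPred_eq] at ha hbt; omega⟩

lemma connected_induce_image_Icc (f : ℕ → X) (hf : ∀ n, T.Adj (f n) (f (n + 1)))
    {i j : ℕ} (hij : i ≤ j) : (T.induce (f '' Set.Icc i j)).Connected := by
  induction j, hij using Nat.le_induction with
  | base =>
    rw [Set.Icc_self, Set.image_singleton, induce_singleton_eq_top]
    exact connected_top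
  | succ j hij ih =>
    have hIcc : Set.Icc i (j + 1) = Set.Icc i j ∪ {j + 1} := by
      ext
      simp only [Set.mem_Icc, Set.union_singleton, Set.mem_insert_iff]
      omega
    rw [hIcc, Set.image_union, Set.image_singleton]
    exact connected_induce_union ih.preconnected (by simp [preconnected_top])
      ⟨j, ⟨hij, le_rfl⟩, rfl⟩ rfl (hf j)

lemma connected_induce_biUnion {S : Set W} (f : W → Set X) (hS : (G.induce S).Connected)
    (hf : ∀ w ∈ S, (T.induce (f w)).Connected)
    (hadj : ∀ w ∈ S, ∀ w' ∈ S, G.Adj w w' → (T.induce (f w ∪ f w')).Connected) :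
    (T.induce (⋃ w ∈ S, f w)).Connected := by
  set U := ⋃ w ∈ S, f w
  have reach : ∀ {u v : S}, (G.induce S).Walk u v → ∀ x (hx : x ∈ f u) y (hy : y ∈ f v),
      (T.induce U).Reachable ⟨x, Set.mem_biUnion u.2 hx⟩ ⟨y, Set.mem_biUnion v.2 hy⟩ := by
    intro u v p
    induction p with
    | @nil u =>
      intro x hx y hy
      exact ((hf _ u.2).preconnected ⟨x, hx⟩ ⟨y, hy⟩).map
        (induceHomOfLE T (Set.subset_biUnion_of_mem u.2)).toHom
    | @cons u v _ huv p ih =>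
      intro x hx y hy
      obtain ⟨⟨z, hz⟩⟩ := (hf _ v.2).nonempty
      have hsub : f u ∪ f v ⊆ U :=
        Set.union_subset (Set.subset_biUnion_of_mem u.2) (Set.subset_biUnion_of_mem v.2)
      exact (((hadj _ u.2 _ v.2 huv).preconnected ⟨x, .inl hx⟩ ⟨z, .inr hz⟩).map
        (induceHomOfLE T hsub).toHom).trans (ih z hz y hy)
  obtain ⟨⟨w, hw⟩⟩ := hS.nonempty
  obtain ⟨⟨x, hx⟩⟩ := (hf w hw).nonempty
  refine (connected_iff_exists_forall_reachable _).2 ⟨⟨x, Set.mem_biUnion hw hx⟩, ?_⟩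
  rintro ⟨y, hy⟩
  obtain ⟨w', hw', hy⟩ := Set.mem_iUnion₂.1 hy
  obtain ⟨p⟩ := hS.preconnected ⟨w, hw⟩ ⟨w', hw'⟩
  exact reach p x hx y hy

end Connectivity

lemma IsSubgraphEmb.isMinor {V W : Type} {H : SimpleGraph V} {G : SimpleGraph W}
    (h : IsSubgraphEmb H G) : IsMinor H G := by
  obtain ⟨f, hinj, hadj⟩ := h
  refine ⟨fun v => {f v}, fun v => ?_, fun u v huv => Set.disjoint_singleton.2 (hinj.ne huv),
    fun u v huv => ⟨f u, rfl, f v, rfl, hadj u v huv⟩⟩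
  rw [induce_singleton_eq_top]
  exact connected_top

lemma IsMinor.trans {U V W : Type} {H : SimpleGraph U} {G : SimpleGraph V}
    {K : SimpleGraph W} (hHG : IsMinor H G) (hGK : IsMinor G K) : IsMinor H K := by
  obtain ⟨ψ, hψ, hψdisj, hψadj⟩ := hHG
  obtain ⟨φ, hφ, hφdisj, hφadj⟩ := hGK
  refine ⟨fun u => ⋃ v ∈ ψ u, φ v, fun u => ?_, fun u u' huu' => ?_, fun u u' huu' => ?_⟩
  · refine connected_induce_biUnion φ (hψ u) (fun v _ => hφ v) fun v _ v' _ hvv' => ?_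
    obtain ⟨a, ha, b, hb, hab⟩ := hφadj v v' hvv'
    exact connected_induce_union (hφ v).preconnected (hφ v').preconnected ha hb hab
  · refine Set.disjoint_iUnion₂_left.2 fun v hv => Set.disjoint_iUnion₂_right.2 fun v' hv' => ?_
    exact hφdisj v v' fun h => (hψdisj u u' huu').ne_of_mem hv hv' h
  · obtain ⟨v, hv, v', hv', hvv'⟩ := hψadj u u' huu'
    obtain ⟨a, ha, b, hb, hab⟩ := hφadj v v' hvv'
    exact ⟨a, Set.mem_biUnion hv ha, b, Set.mem_biUnion hv' hb, hab⟩

lemma exists_forall_mem_of_ordConnected {ι : Type} [Finite ι] [Nonempty ι] (I : ι → Set ℕ)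
    (hI : ∀ i, (I i).OrdConnected) (hII : ∀ i j, (I i ∩ I j).Nonempty) (b : ℕ)
    (hb : ∀ i, ∃ t ∈ I i, b ≤ t) : ∃ t, b ≤ t ∧ ∀ i, t ∈ I i := by
  obtain ⟨j, hj⟩ := Finite.exists_max fun i => sInf (I i)
  have hup : ∀ i, ∃ u ∈ I i, max b (sInf (I j)) ≤ u := by
    intro i
    rcases le_total (sInf (I j)) b with hbj | hbj
    · simpa [max_eq_left hbj] using hb i
    · obtain ⟨t, hti, htj⟩ := hII i j
      exact ⟨t, hti, by rw [max_eq_right hbj]; exact Nat.sInf_le htj⟩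
  refine ⟨max b (sInf (I j)), le_max_left _ _, fun i => ?_⟩
  obtain ⟨u, hu, htu⟩ := hup i
  exact (hI i).out (Nat.sInf_mem ⟨u, hu⟩) hu ⟨(hj i).trans (le_max_right _ _), htu⟩

def combGraph : SimpleGraph (ℕ × ℕ) :=
  SimpleGraph.fromRel fun x y =>
    (x.2 = 0 ∧ y.2 = 0 ∧ x.1 + 1 = y.1) ∨ (x.1 = y.1 ∧ x.2 + 1 = y.2)

def columnHeight (s : ℕ) (x : ℕ × ℕ) : ℕ := if x.1 = s then x.2 + 1 else 0

lemma fst_le_of_combGraph_adj {x y : ℕ × ℕ} (h : combGraph.Adj x y) : y.1 ≤ x.1 + 1 := by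
  simp only [combGraph, fromRel_adj] at h
  omega

lemma columnHeight_le_of_combGraph_adj (s : ℕ) {x y : ℕ × ℕ} (h : combGraph.Adj x y) :
    columnHeight s y ≤ columnHeight s x + 1 := by
  simp only [combGraph, fromRel_adj] at h
  unfold columnHeight
  split_ifs <;> omega

theorem combGraph_helly {ι : Type} [Finite ι] [Nonempty ι] (U : ι → Set (ℕ × ℕ))
    (hU : ∀ i, (combGraph.induce (U i)).Preconnected) (hUU : ∀ i j, (U i ∩ U j).Nonempty) :
    ∃ x, ∀ i, x ∈ U i := by
  have image_inter (h : ℕ × ℕ → ℕ) (i j : ι) : (h '' U i ∩ h '' U j).Nonempty :=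
    ((hUU i j).image h).mono (Set.image_inter_subset h _ _)
  obtain ⟨s, -, hs⟩ := exists_forall_mem_of_ordConnected (fun i => Prod.fst '' U i)
    (fun i => ordConnected_image_of_induce_preconnected (fun _ _ => fst_le_of_combGraph_adj) (hU i))
    (image_inter _) 0 fun i => by
      obtain ⟨x, hx, -⟩ := hUU i i
      exact ⟨x.1, ⟨x, hx, rfl⟩, Nat.zero_le _⟩
  obtain ⟨t, ht, hst⟩ := exists_forall_mem_of_ordConnected (fun i => columnHeight s '' U i)
    (fun i => ordConnected_image_of_induce_preconnected
      (fun _ _ => columnHeight_le_of_combGraph_adj s) (hU i))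
    (image_inter _) 1 fun i => by
      obtain ⟨x, hx, hxs⟩ := hs i
      exact ⟨_, ⟨x, hx, rfl⟩, by simp [columnHeight, hxs]⟩
  refine ⟨(s, t - 1), fun i => ?_⟩
  obtain ⟨x, hx, hxt⟩ := hst i
  have hxst : x = (s, t - 1) := by
    unfold columnHeight at hxt
    split_ifs at hxt with h
    · ext <;> simp only <;> omega
    · omega
  exact hxst ▸ hx

def spineSeg (i j : ℕ) : Set (ℕ × ℕ) := (fun s => (s, 0)) '' Set.Icc i j

def columnSeg (s i j : ℕ) : Set (ℕ × ℕ) := (fun k => (s, k)) '' Set.Icc i j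

@[simp]
lemma mem_spineSeg {i j : ℕ} {x : ℕ × ℕ} : x ∈ spineSeg i j ↔ x.2 = 0 ∧ i ≤ x.1 ∧ x.1 ≤ j := by
  obtain ⟨s, k⟩ := x
  simp only [spineSeg, Set.mem_image, Set.mem_Icc, Prod.mk.injEq]
  constructor
  · rintro ⟨s, hs, rfl, rfl⟩
    exact ⟨rfl, hs⟩
  · rintro ⟨rfl, hs⟩
    exact ⟨s, hs, rfl, rfl⟩

@[simp]
lemma mem_columnSeg {s i j : ℕ} {x : ℕ × ℕ} :
    x ∈ columnSeg s i j ↔ x.1 = s ∧ i ≤ x.2 ∧ x.2 ≤ j := by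
  obtain ⟨t, k⟩ := x
  simp only [columnSeg, Set.mem_image, Set.mem_Icc, Prod.mk.injEq]
  constructor
  · rintro ⟨k, hk, rfl, rfl⟩
    exact ⟨rfl, hk⟩
  · rintro ⟨rfl, hk⟩
    exact ⟨k, hk, rfl, rfl⟩

lemma connected_induce_spineSeg {i j : ℕ} (hij : i ≤ j) :
    (combGraph.induce (spineSeg i j)).Connected :=
  connected_induce_image_Icc _ (fun s => by simp [combGraph]) hij

lemma connected_induce_columnSeg (s : ℕ) {i j : ℕ} (hij : i ≤ j) :
    (combGraph.induce (columnSeg s i j)).Connected :=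
  connected_induce_image_Icc _ (fun k => by simp [combGraph]) hij

/-- Row `a` of cells owns the column at `A = a * (m + 1)` of the comb. The left vertices of cell
`(a, b)` occupy the spine from `A - b - 1` to `A + m - b`, which meets the spine part of cell
`(a + 1, b)` at `A + m - b`, together with the column up to height `b + 1`; its right vertices
occupy heights `b + 1` and `b + 2` of the column. -/
def hardwareModel (m c : ℕ) (w : Fin m × Fin m × Fin (2 * c)) : Set (ℕ × ℕ) :=
  if (w.2.2 : ℕ) < c then
    spineSeg (w.1 * (m + 1) - (w.2.1 + 1)) (w.1 * (m + 1) + m - w.2.1) ∪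
      columnSeg (w.1 * (m + 1)) 0 (w.2.1 + 1)
  else columnSeg (w.1 * (m + 1)) (w.2.1 + 1) (w.2.1 + 2)

lemma mem_hardwareModel {m c : ℕ} {a b : Fin m} {d : Fin (2 * c)} {x : ℕ × ℕ} :
    x ∈ hardwareModel m c (a, b, d) ↔
      (d < c ∧ ((x.2 = 0 ∧ a * (m + 1) ≤ x.1 + b + 1 ∧ x.1 + b ≤ a * (m + 1) + m) ∨
        (x.1 = a * (m + 1) ∧ x.2 ≤ b + 1))) ∨
      (c ≤ d ∧ x.1 = a * (m + 1) ∧ b + 1 ≤ x.2 ∧ x.2 ≤ b + 2) := by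
  have := b.2
  dsimp only [hardwareModel]
  generalize (a : ℕ) * (m + 1) = A
  split_ifs <;> simp only [Set.mem_union, mem_spineSeg, mem_columnSeg] <;> omega

lemma connected_induce_hardwareModel {m c : ℕ} (w : Fin m × Fin m × Fin (2 * c)) :
    (combGraph.induce (hardwareModel m c w)).Connected := by
  have := w.2.1.2
  unfold hardwareModel
  generalize (w.1 : ℕ) * (m + 1) = A
  by_cases hd : (w.2.2 : ℕ) < c
  · rw [if_pos hd]
    refine induce_union_connected (connected_induce_spineSeg (by omega)).preconnected
      (connected_induce_columnSeg _ (Nat.zero_le _)).preconnected ⟨(A, 0), ?_⟩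
    simp only [Set.mem_inter_iff, mem_spineSeg, mem_columnSeg, true_and]
    omega
  · rw [if_neg hd]
    exact connected_induce_columnSeg _ (Nat.le_succ _)

lemma hardwareModel_inter_nonempty_of_adj {m c : ℕ} {w w' : Fin m × Fin m × Fin (2 * c)}
    (h : (hardwareGraph m c).Adj w w') :
    (hardwareModel m c w ∩ hardwareModel m c w').Nonempty := by
  suffices key : ∀ {w w' : Fin m × Fin m × Fin (2 * c)},
      (w.1 = w'.1 ∧ w.2.1 = w'.2.1 ∧ (w.2.2 : ℕ) < c ∧ c ≤ (w'.2.2 : ℕ)) ∨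
      (w.2.1 = w'.2.1 ∧ w.2.2 = w'.2.2 ∧ (w.2.2 : ℕ) < c ∧ (w.1 : ℕ) + 1 = w'.1) ∨
      (w.1 = w'.1 ∧ w.2.2 = w'.2.2 ∧ c ≤ (w.2.2 : ℕ) ∧ (w.2.1 : ℕ) + 1 = w'.2.1) →
      (hardwareModel m c w ∩ hardwareModel m c w').Nonempty by
    rw [hardwareGraph, fromRel_adj] at h
    rcases h.2 with h | h
    · exact key h
    · exact Set.inter_comm _ _ ▸ key h
  rintro ⟨a, b, d⟩ ⟨a', b', d'⟩ h
  simp only [Fin.ext_iff] at h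
  simp only [Set.Nonempty, Set.mem_inter_iff, mem_hardwareModel]
  rcases h with ⟨ha, hb, hd, hd'⟩ | ⟨hb, hd, hd', ha⟩ | ⟨ha, hd, hd', hb⟩
  · rw [ha]
    exact ⟨(a' * (m + 1), b + 1), by omega⟩
  · have hA : (a' : ℕ) * (m + 1) = a * (m + 1) + m + 1 := by rw [← ha]; ring
    rw [hA]
    generalize (a : ℕ) * (m + 1) = A
    exact ⟨(A + m - b, 0), by omega⟩
  · rw [ha]
    exact ⟨(a' * (m + 1), b + 2), by omega⟩

lemma eq_of_mul_succ_le_add {a a' m : ℕ} (h : a * (m + 1) ≤ a' * (m + 1) + m)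
    (h' : a' * (m + 1) ≤ a * (m + 1) + m) : a = a' := by
  have le_of (x y : ℕ) (hxy : x * (m + 1) ≤ y * (m + 1) + m) : x ≤ y :=
    Nat.lt_succ_iff.1 (Nat.lt_of_mul_lt_mul_right (a := m + 1) (by rw [Nat.succ_mul]; omega))
  exact le_antisymm (le_of a a' h) (le_of a' a h')

/-- The slot of `w` in the bag of the comb vertex `x`. A spine vertex meets only left vertices, of
at most two consecutive rows of cells, and those of the later row are shifted by one. A column
vertex at height `k ≥ 1` meets left vertices with `b ≥ k - 1` and right vertices with
`b ∈ {k - 2, k - 1}`. -/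
def bagSlot (m c : ℕ) (x : ℕ × ℕ) (w : Fin m × Fin m × Fin (2 * c)) : ℕ × ℕ :=
  (if x.2 = 0 then w.2.1 + if x.1 < w.1 * (m + 1) then 1 else 0
    else if (w.2.2 : ℕ) < c then w.2.1 + 2 - x.2
    else if w.2.1 + 1 = x.2 then 0 else m,
   if (w.2.2 : ℕ) < c then w.2.2 else w.2.2 - c)

lemma card_hardwareModel_le (m c : ℕ) (x : ℕ × ℕ) :
    Nat.card {w // x ∈ hardwareModel m c w} ≤ c * m + c := by
  classical
  rw [Nat.card_eq_fintype_card, Fintype.card_subtype]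
  calc _ ≤ (Finset.range (m + 1) ×ˢ Finset.range c).card := by
        refine Finset.card_le_card_of_injOn (bagSlot m c x) ?_ ?_
        · rintro ⟨a, b, d⟩ hw
          simp only [Finset.coe_filter, Finset.mem_univ, true_and, Set.mem_ofPred_eq,
            mem_hardwareModel] at hw
          simp only [bagSlot, Finset.coe_product, Finset.coe_range, Set.mem_prod, Set.mem_Iio]
          have := b.2
          have := d.2
          generalize (a : ℕ) * (m + 1) = A at hw ⊢
          split_ifs <;> omega
        · rintro ⟨a, b, d⟩ hw ⟨a', b', d'⟩ hw' hslot
          simp only [Finset.coe_filter, Finset.mem_univ, true_and, Set.mem_ofPred_eq,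
            mem_hardwareModel] at hw hw'
          simp only [bagSlot, Prod.mk.injEq] at hslot
          have := b.2
          have := b'.2
          have := d.2
          have := d'.2
          obtain rfl : a = a' := by
            refine Fin.ext (eq_of_mul_succ_le_add (m := m) ?_ ?_) <;> split_ifs at hslot <;> omega
          simp only [Prod.mk.injEq, Fin.ext_iff, true_and]
          split_ifs at hslot <;> omega
    _ = c * m + c := by simp only [Finset.card_product, Finset.card_range]; ring

lemma card_le_card_of_forall_exists_mem {ι W : Type} [Finite W] {χ : ι → Set W}
    (hχ : ∀ i j, i ≠ j → Disjoint (χ i) (χ j)) {P : W → Prop} (h : ∀ i, ∃ w ∈ χ i, P w) :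
    Nat.card ι ≤ Nat.card {w // P w} := by
  choose g hgχ hgP using h
  refine Nat.card_le_card_of_injective (fun i => ⟨g i, hgP i⟩) fun i j hij => ?_
  by_contra hne
  exact (hχ i j hne).ne_of_mem (hgχ i) (hgχ j) (congrArg Subtype.val hij)

theorem not_isMinor_top_hardwareGraph (m c : ℕ) :
    ¬ IsMinor (⊤ : SimpleGraph (Fin (c * m + c + 1))) (hardwareGraph m c) := by
  rintro ⟨χ, hχ, hdisj, hadj⟩
  set U := fun v => ⋃ w ∈ χ v, hardwareModel m c w
  have hU (v) : (combGraph.induce (U v)).Connected :=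
    connected_induce_biUnion _ (hχ v) (fun w _ => connected_induce_hardwareModel w)
      fun w _ w' _ hww' => induce_union_connected (connected_induce_hardwareModel w).preconnected
        (connected_induce_hardwareModel w').preconnected (hardwareModel_inter_nonempty_of_adj hww')
  have hUU (u v) : (U u ∩ U v).Nonempty := by
    rcases eq_or_ne u v with rfl | huv
    · obtain ⟨⟨x, hx⟩⟩ := (hU u).nonempty
      exact ⟨x, hx, hx⟩
    · obtain ⟨p, hp, q, hq, hpq⟩ := hadj u v ((top_adj u v).2 huv)
      obtain ⟨x, hxp, hxq⟩ := hardwareModel_inter_nonempty_of_adj hpq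
      exact ⟨x, Set.mem_biUnion hp hxp, Set.mem_biUnion hq hxq⟩
  obtain ⟨x, hx⟩ := combGraph_helly U (fun v => (hU v).preconnected) hUU
  have hcard := card_le_card_of_forall_exists_mem hdisj (P := (x ∈ hardwareModel m c ·))
    fun v => by simpa only [U, Set.mem_iUnion, exists_prop] using hx v
  have := card_hardwareModel_le m c x
  rw [Nat.card_eq_fintype_card, Fintype.card_fin] at hcard
  omega

theorem not_isMinor_bigClique_general (m c : ℕ) :
    ¬ IsMinor (⊤ : SimpleGraph (Fin (c * m + c + 1))) (hardwareGraph m c) ∧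
    ∀ (V : Type) (P : SimpleGraph V),
      (IsSubgraphEmb (⊤ : SimpleGraph (Fin (c * m + c + 1))) P ∨
        IsMinor (⊤ : SimpleGraph (Fin (c * m + c + 1))) P) →
      ¬ IsMinor P (hardwareGraph m c) := by
  refine ⟨not_isMinor_top_hardwareGraph m c, fun V P hP hPF => ?_⟩
  have hKP : IsMinor (⊤ : SimpleGraph (Fin (c * m + c + 1))) P := hP.elim IsSubgraphEmb.isMinor id
  exact not_isMinor_top_hardwareGraph m c (hKP.trans hPF)

/-- For every `m ≥ 1` and `c ≥ 1`, the complete graph `K_{cm+c+1}` is not a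
minor of the hardware graph `F(m, c)`; consequently, no graph containing
`K_{cm+c+1}` as a subgraph or as a minor is a minor of `F(m, c)`. -/
theorem not_isMinor_bigClique (m c : ℕ) (hm : 1 ≤ m) (hc : 1 ≤ c) :
    ¬ IsMinor (⊤ : SimpleGraph (Fin (c * m + c + 1))) (hardwareGraph m c) ∧
    ∀ (V : Type) (P : SimpleGraph V),
      (IsSubgraphEmb (⊤ : SimpleGraph (Fin (c * m + c + 1))) P ∨
        IsMinor (⊤ : SimpleGraph (Fin (c * m + c + 1))) P) →
      ¬ IsMinor P (hardwareGraph m c) :=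
  not_isMinor_bigClique_general m c
end

section
/- For every m ≥ 1 and c ≥ 1, the c(m+1) × c(m+1) two-dimensional grid graph is not a minor of the hardware graph F(m,c). -/
open SimpleGraph

/-!
Branch sets of a minor model are nonempty and pairwise disjoint, so a minor of `F(m, c)` has at
most `2cm²` vertices, while the grid has `c²(m + 1)²`; this settles `c ≥ 2`. For `c = 1` every
vertex of `F(m, 1)` has at most three neighbours, so the branch set of each of the `(m - 1)²`
interior grid vertices, which have four neighbours, cannot be a single vertex. For `m ≥ 1` the
branch sets then cover at least `(m + 1)² + (m - 1)² = 2m² + 2` vertices of a graph with `2m²`.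
-/

variable {V W : Type}

structure IsMinorModel (H : SimpleGraph V) (G : SimpleGraph W) (φ : V → Set W) : Prop where
  connected : ∀ v, (G.induce (φ v)).Connected
  disjoint : ∀ u v, u ≠ v → Disjoint (φ u) (φ v)
  adj : ∀ u v, H.Adj u v → ∃ a ∈ φ u, ∃ b ∈ φ v, G.Adj a b

theorem isMinor_iff_exists_isMinorModel {H : SimpleGraph V} {G : SimpleGraph W} :
    IsMinor H G ↔ ∃ φ, IsMinorModel H G φ :=
  ⟨fun ⟨φ, h₁, h₂, h₃⟩ => ⟨φ, h₁, h₂, h₃⟩, fun ⟨φ, h⟩ => ⟨φ, h.1, h.2, h.3⟩⟩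

namespace IsMinorModel

variable {H : SimpleGraph V} {G : SimpleGraph W} {φ : V → Set W}

theorem nonempty (hφ : IsMinorModel H G φ) (v : V) : (φ v).Nonempty :=
  Set.nonempty_coe_sort.mp (hφ.connected v).nonempty

theorem sum_ncard_le [Fintype V] [Finite W] (hφ : IsMinorModel H G φ) :
    ∑ v, (φ v).ncard ≤ Nat.card W := by
  rw [← finsum_eq_sum_of_fintype, ← Set.ncard_iUnion_of_finite (fun _ => Set.toFinite _)
    fun u v => hφ.disjoint u v]
  exact Set.ncard_le_card _

theorem card_le [Fintype V] [Finite W] (hφ : IsMinorModel H G φ) :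
    Fintype.card V ≤ Nat.card W :=
  calc Fintype.card V = ∑ _ : V, 1 := by simp
    _ ≤ ∑ v, (φ v).ncard := Finset.sum_le_sum fun v _ => (hφ.nonempty v).ncard_pos
    _ ≤ Nat.card W := hφ.sum_ncard_le

theorem encard_neighborSet_le (hφ : IsMinorModel H G φ) {v : V} {w : W} (hv : φ v = {w}) :
    (H.neighborSet v).encard ≤ (G.neighborSet w).encard := by
  have exists_adj : ∀ u ∈ H.neighborSet v, ∃ b ∈ φ u, G.Adj w b := fun u hu => by
    obtain ⟨a, ha, b, hb, hab⟩ := hφ.adj v u hu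
    rw [hv, Set.mem_singleton_iff] at ha
    exact ⟨b, hb, ha ▸ hab⟩
  have : Nonempty W := ⟨w⟩
  choose! b hb hadj using exists_adj
  refine Set.encard_le_encard_of_injOn (f := b) (fun u hu => hadj u hu) fun u hu u' hu' h => ?_
  by_contra hne
  exact Set.disjoint_left.mp (hφ.disjoint u u' hne) (hb u hu) (h ▸ hb u' hu')

theorem two_le_ncard [Finite W] (hφ : IsMinorModel H G φ) {v : V}
    (hdeg : ∀ w, (G.neighborSet w).encard < (H.neighborSet v).encard) : 2 ≤ (φ v).ncard := by
  by_contra! hlt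
  have hone : (φ v).ncard = 1 :=
    le_antisymm (by omega) (hφ.nonempty v).ncard_pos
  obtain ⟨w, hw⟩ := Set.ncard_eq_one.mp hone
  exact (hdeg w).not_ge (hφ.encard_neighborSet_le hw)

end IsMinorModel

theorem IsMinor.card_le {H : SimpleGraph V} {G : SimpleGraph W} [Fintype V] [Finite W]
    (h : IsMinor H G) : Fintype.card V ≤ Nat.card W := by
  obtain ⟨φ, hφ⟩ := isMinor_iff_exists_isMinorModel.mp h
  exact hφ.card_le

theorem encard_neighborSet_hardwareGraph_one_le {m : ℕ} (w : Fin m × Fin m × Fin (2 * 1)) :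
    ((hardwareGraph m 1).neighborSet w).encard ≤ 3 := by
  -- A neighbour of `w` is its cell-mate, or else it lies in one of the two cells adjacent to
  -- `w`'s cell in `w`'s direction, and these two are told apart by their coordinate sum.
  let side : Fin m × Fin m × Fin (2 * 1) → Option Bool := fun y =>
    if y.2.2 = w.2.2 then some (decide (w.1.val + w.2.1.val < y.1.val + y.2.1.val)) else none
  calc _ ≤ (Set.univ : Set (Option Bool)).encard :=
        Set.encard_le_encard_of_injOn (Set.mapsTo_univ side _) ?_
    _ = 3 := by simp [Set.encard_univ]
  rintro ⟨a, b, d⟩ ⟨-, h⟩ ⟨a', b', d'⟩ ⟨-, h'⟩ heq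
  simp only [Fin.ext_iff] at h h'
  simp only [side, Prod.mk.injEq, Fin.ext_iff] at heq ⊢
  split_ifs at heq <;> simp only [Option.some.injEq, decide_eq_decide] at heq <;> omega

theorem four_le_encard_neighborSet_gridGraph {n n' : ℕ} {i : Fin n} {j : Fin n'}
    (hi₀ : 0 < i.val) (hi : i.val + 1 < n) (hj₀ : 0 < j.val) (hj : j.val + 1 < n') :
    4 ≤ ((gridGraph n n').neighborSet (i, j)).encard := by
  let nbr : Bool × Bool → Fin n × Fin n' := fun
    | (true, s) => (⟨if s then i + 1 else i - 1, by split <;> omega⟩, j)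
    | (false, s) => (i, ⟨if s then j + 1 else j - 1, by split <;> omega⟩)
  calc (4 : ℕ∞) = (Set.univ : Set (Bool × Bool)).encard := by simp [Set.encard_univ]
    _ ≤ _ := Set.encard_le_encard_of_injOn (f := nbr) ?_ ?_
  · rintro ⟨_ | _, _ | _⟩ - <;>
      simp only [nbr, mem_neighborSet, gridGraph, fromRel_adj, ne_eq, Prod.ext_iff, Fin.ext_iff,
        Bool.false_eq_true, ↓reduceIte, true_and, and_true, true_or, or_true] <;> omega
  · rintro ⟨_ | _, _ | _⟩ - ⟨_ | _, _ | _⟩ - h <;>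
      simp only [nbr, Prod.ext_iff, Fin.ext_iff, Bool.false_eq_true, ↓reduceIte] at h ⊢ <;> omega

theorem sq_add_sub_two_sq_le_sum {n : ℕ} (f : Fin n × Fin n → ℕ) (h₁ : ∀ v, 1 ≤ f v)
    (h₂ : ∀ i j : Fin n, 0 < i.val → i.val + 1 < n → 0 < j.val → j.val + 1 < n → 2 ≤ f (i, j)) :
    n ^ 2 + (n - 2) ^ 2 ≤ ∑ v, f v := by
  let inner : Fin n → ℕ := fun i => if 0 < i.val ∧ i.val + 1 < n then 1 else 0
  have sum_inner : ∑ i, inner i = n - 2 := by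
    rw [Fin.sum_univ_eq_sum_range (fun k => if 0 < k ∧ k + 1 < n then 1 else 0), Finset.sum_boole,
      show (Finset.range n).filter (fun k => 0 < k ∧ k + 1 < n) = Finset.Ioo 0 (n - 1) by
        ext; simp only [Finset.mem_filter, Finset.mem_range, Finset.mem_Ioo]; omega]
    rw [Nat.card_Ioo, Nat.cast_id]; omega
  calc n ^ 2 + (n - 2) ^ 2 = ∑ v : Fin n × Fin n, (1 + inner v.1 * inner v.2) := by
        rw [Finset.sum_add_distrib, Fintype.sum_prod_type' (fun i j => inner i * inner j),
          ← Finset.sum_mul_sum, sum_inner]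
        simp [sq]
    _ ≤ ∑ v, f v := Finset.sum_le_sum fun ⟨i, j⟩ _ => by
        simp only [inner]
        split_ifs with hi hj hj
        · exact h₂ i j hi.1 hi.2 hj.1 hj.2
        all_goals simpa using h₁ (i, j)

theorem not_isMinor_gridGraph_hardwareGraph_one (m : ℕ) :
    ¬ IsMinor (gridGraph (m + 1) (m + 1)) (hardwareGraph m 1) := by
  rw [isMinor_iff_exists_isMinorModel]
  rintro ⟨φ, hφ⟩
  have interior_two_le : ∀ i j : Fin (m + 1), 0 < i.val → i.val + 1 < m + 1 → 0 < j.val →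
      j.val + 1 < m + 1 → 2 ≤ (φ (i, j)).ncard := fun i j hi₀ hi hj₀ hj =>
    hφ.two_le_ncard fun w => (encard_neighborSet_hardwareGraph_one_le w).trans_lt <|
      lt_of_lt_of_le (by norm_num) (four_le_encard_neighborSet_gridGraph hi₀ hi hj₀ hj)
  have lower := sq_add_sub_two_sq_le_sum _ (fun v => (hφ.nonempty v).ncard_pos) interior_two_le
  have upper := hφ.sum_ncard_le
  simp only [Nat.card_eq_fintype_card, Fintype.card_prod, Fintype.card_fin] at upper
  rcases m with _ | k
  · omega
  · rw [show k + 1 + 1 - 2 = k by omega] at lower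
    nlinarith

theorem not_isMinor_bigGrid_general (m c : ℕ) (hc : 1 ≤ c) :
    ¬ IsMinor (gridGraph (c * (m + 1)) (c * (m + 1))) (hardwareGraph m c) := by
  obtain rfl | hc₂ := hc.eq_or_lt
  · rw [one_mul]
    exact not_isMinor_gridGraph_hardwareGraph_one m
  · intro h
    have hcard := h.card_le
    simp only [Nat.card_eq_fintype_card, Fintype.card_prod, Fintype.card_fin] at hcard
    nlinarith [Nat.mul_le_mul_left (c * (m + 1) * (m + 1)) hc₂]

/-- For every `m ≥ 1` and `c ≥ 1`, the `c(m+1) × c(m+1)` two-dimensional grid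
graph is not a minor of the hardware graph `F(m, c)`. -/
theorem not_isMinor_bigGrid (m c : ℕ) (hm : 1 ≤ m) (hc : 1 ≤ c) :
    ¬ IsMinor (gridGraph (c * (m + 1)) (c * (m + 1))) (hardwareGraph m c) :=
  not_isMinor_bigGrid_general m c hc
end

section
/- For every m ≥ 1 and c ≥ 1, the complete graph K_{cm+1} is a minor of the hardware graph F(m,c). -/
/-!
For `j < m` and `d < c` the branch set of `(j, d)` is an L-shaped path that runs down column `j` from the diagonal cell `(j, j)` on the
left-half index `d`, and along row `j` up to the diagonal on the right-half index `c + d`.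
Two such paths with columns `j' ≤ j` meet in the cell `(j, j')`, whose halves are completely
joined. These `c m` paths use only the cells on or below the diagonal, so the cells strictly
above it form one more branch set, touching row `j` in cell `(j, j + 1)`. When `j = m - 1` there
is no such cell (and when `m = 1` no cell above the diagonal at all), so the last path gives up its
left arm, the single vertex `(m - 1, m - 1, c - 1)`, to the extra branch set.
-/

open SimpleGraph

open Function

section CliqueModel

variable {α ι W : Type} {G : SimpleGraph W}

structure IsCliqueModel (G : SimpleGraph W) (φ : ι → Set W) : Prop where
  connected : ∀ i, (G.induce (φ i)).Connected
  disjoint : Pairwise (Disjoint on φ)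
  exists_adj : Pairwise fun i j => ∃ a ∈ φ i, ∃ b ∈ φ j, G.Adj a b

theorem IsCliqueModel.isMinor_top {φ : ι → Set W} (h : IsCliqueModel G φ) (e : α ↪ ι) :
    IsMinor (⊤ : SimpleGraph α) G :=
  ⟨φ ∘ e, fun v => h.connected (e v), fun _ _ huv => h.disjoint (e.injective.ne huv),
    fun _ _ huv => h.exists_adj (e.injective.ne huv.ne)⟩

end CliqueModel

theorem SimpleGraph.reachable_induce_of_adj_succ {V : Type} {G : SimpleGraph V} {s : Set V}
    {n : ℕ} (f : Fin n → V) (hf : ∀ k l : Fin n, k.val + 1 = l.val → G.Adj (f k) (f l))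
    {i j : Fin n} (hij : i ≤ j) (hs : ∀ k, i ≤ k → k ≤ j → f k ∈ s) :
    (G.induce s).Reachable ⟨f i, hs i le_rfl hij⟩ ⟨f j, hs j hij le_rfl⟩ := by
  obtain ⟨t, ht⟩ : ∃ t, j.val = i.val + t := ⟨j.val - i.val, by omega⟩
  induction t generalizing j with
  | zero =>
    obtain rfl : j = i := Fin.ext (by omega)
    rfl
  | succ t ih =>
    let j' : Fin n := ⟨i.val + t, by omega⟩
    have hij' : i ≤ j' := Fin.le_iff_val_le_val.mpr (by simp [j'])
    have hj'j : j' ≤ j := Fin.le_iff_val_le_val.mpr (by simp [j']; omega)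
    refine (ih hij' (fun k hik hkj => hs k hik (hkj.trans hj'j)) rfl).trans ?_
    exact Adj.reachable (hf j' j (by simp [j']; omega))

namespace hardwareGraph

variable {m c : ℕ}

theorem adj_left_right {a b : Fin m} {d e : Fin (2 * c)} (hd : d.val < c) (he : c ≤ e.val) :
    (hardwareGraph m c).Adj (a, b, d) (a, b, e) := by
  refine (fromRel_adj _ _ _).mpr ⟨fun h => ?_, Or.inl (Or.inl ⟨rfl, rfl, hd, he⟩)⟩
  simp only [Prod.mk.injEq, Fin.ext_iff] at h
  omega

theorem adj_down {a a' b : Fin m} {d : Fin (2 * c)} (hd : d.val < c) (ha : a.val + 1 = a'.val) :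
    (hardwareGraph m c).Adj (a, b, d) (a', b, d) := by
  refine (fromRel_adj _ _ _).mpr ⟨fun h => ?_, Or.inl (Or.inr (Or.inl ⟨rfl, rfl, hd, ha⟩))⟩
  simp only [Prod.mk.injEq, Fin.ext_iff] at h
  omega

theorem adj_right {a b b' : Fin m} {d : Fin (2 * c)} (hd : c ≤ d.val) (hb : b.val + 1 = b'.val) :
    (hardwareGraph m c).Adj (a, b, d) (a, b', d) := by
  refine (fromRel_adj _ _ _).mpr ⟨fun h => ?_, Or.inl (Or.inr (Or.inr ⟨rfl, rfl, hd, hb⟩))⟩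
  simp only [Prod.mk.injEq, Fin.ext_iff] at h
  omega

variable {s : Set (Fin m × Fin m × Fin (2 * c))}

theorem reachable_induce_column {a a' b : Fin m} {d : Fin (2 * c)} (hd : d.val < c)
    (haa' : a ≤ a') (hs : ∀ x, a ≤ x → x ≤ a' → (x, b, d) ∈ s) :
    ((hardwareGraph m c).induce s).Reachable ⟨(a, b, d), hs a le_rfl haa'⟩
      ⟨(a', b, d), hs a' haa' le_rfl⟩ :=
  reachable_induce_of_adj_succ (fun x => (x, b, d)) (fun _ _ h => adj_down hd h) haa' hs

theorem reachable_induce_row {a b b' : Fin m} {d : Fin (2 * c)} (hd : c ≤ d.val)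
    (hbb' : b ≤ b') (hs : ∀ y, b ≤ y → y ≤ b' → (a, y, d) ∈ s) :
    ((hardwareGraph m c).induce s).Reachable ⟨(a, b, d), hs b le_rfl hbb'⟩
      ⟨(a, b', d), hs b' hbb' le_rfl⟩ :=
  reachable_induce_of_adj_succ (fun y => (a, y, d)) (fun _ _ h => adj_right hd h) hbb' hs

def branchSet (m c : ℕ) : Option (Fin m × Fin c) → Set (Fin m × Fin m × Fin (2 * c))
  | none => {x | x.1 < x.2.1 ∨ (x.1.val = m - 1 ∧ x.2.1.val = m - 1 ∧ x.2.2.val = c - 1)}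
  | some (j, d) =>
      {x | x.2.1 = j ∧ j ≤ x.1 ∧ x.2.2.val = d.val ∧ ¬(j.val = m - 1 ∧ d.val = c - 1)} ∪
      {x | x.1 = j ∧ x.2.1 ≤ j ∧ x.2.2.val = c + d.val}

theorem connected_induce_branchSet_some (j : Fin m) (d : Fin c) :
    ((hardwareGraph m c).induce (branchSet m c (some (j, d)))).Connected := by
  have hcd : c + d.val < 2 * c := by omega
  have hr : ((j, j, ⟨c + d, hcd⟩) : Fin m × Fin m × Fin (2 * c)) ∈ branchSet m c (some (j, d)) :=
    Or.inr ⟨rfl, le_rfl, rfl⟩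
  refine (connected_iff_exists_forall_reachable _).mpr ⟨⟨_, hr⟩, ?_⟩
  rintro ⟨⟨a, b, e⟩, hx⟩
  simp only [branchSet, Set.mem_union, Set.mem_ofPred_eq] at hx
  rcases hx with ⟨rfl, hba, he, hcorner⟩ | ⟨rfl, hba, he⟩
  · have hjj : ((b, b, e) : Fin m × Fin m × Fin (2 * c)) ∈ branchSet m c (some (b, d)) :=
      Or.inl ⟨rfl, le_rfl, he, hcorner⟩
    have hrj : ((hardwareGraph m c).induce _).Reachable ⟨_, hr⟩ ⟨_, hjj⟩ :=
      Adj.reachable (adj_left_right (by omega) (by simp)).symm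
    exact hrj.trans (reachable_induce_column (by omega) hba
      fun x hx _ => Or.inl ⟨rfl, hx, he, hcorner⟩)
  · obtain rfl : e = ⟨c + d, hcd⟩ := Fin.ext he
    exact (reachable_induce_row (by simp) hba fun y _ hy => Or.inr ⟨rfl, hy, rfl⟩).symm

theorem connected_induce_branchSet_none (hm : 1 ≤ m) (hc : 1 ≤ c) :
    ((hardwareGraph m c).induce (branchSet m c none)).Connected := by
  set last : Fin m := ⟨m - 1, by omega⟩
  set l : Fin (2 * c) := ⟨c - 1, by omega⟩
  have hr : (last, last, l) ∈ branchSet m c none := Or.inr ⟨rfl, rfl, rfl⟩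
  have hcol : ∀ a x, a ≤ x → x ≤ last → (x, last, l) ∈ branchSet m c none := by
    intro a x _ hx
    rcases (Fin.le_iff_val_le_val.mp hx).lt_or_eq with hlt | heq
    · exact Or.inl hlt
    · exact Or.inr ⟨heq, rfl, rfl⟩
  have hright : ∀ a b (e : Fin (2 * c)) (hab : a < b), c ≤ e.val →
      ((hardwareGraph m c).induce _).Reachable ⟨_, hr⟩ ⟨(a, b, e), Or.inl hab⟩ := by
    intro a b e hab he
    have hb : b ≤ last := Fin.le_iff_val_le_val.mpr (by simp [last]; omega)
    have hrow : ∀ y, b ≤ y → y ≤ last → (a, y, e) ∈ branchSet m c none :=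
      fun y hy _ => Or.inl (hab.trans_le hy)
    have hal : (a, last, l) ∈ branchSet m c none := Or.inl (hab.trans_le hb)
    have hswitch : ((hardwareGraph m c).induce _).Reachable ⟨_, hal⟩ ⟨_, hrow last hb le_rfl⟩ :=
      Adj.reachable (adj_left_right (by simp [l]; omega) he)
    exact (reachable_induce_column (by simp [l]; omega) (hab.le.trans hb) (hcol a)).symm.trans
      (hswitch.trans (reachable_induce_row he hb hrow).symm)
  refine (connected_iff_exists_forall_reachable _).mpr ⟨⟨_, hr⟩, ?_⟩
  rintro ⟨⟨a, b, e⟩, hx⟩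
  simp only [branchSet, Set.mem_ofPred_eq] at hx
  rcases hx with hab | ⟨ha, hb, he⟩
  · rcases le_or_gt c e.val with he | he
    · exact hright a b e hab he
    · exact (hright a b _ hab le_rfl).trans
        (Adj.reachable (adj_left_right (b := b) (e := ⟨c, by omega⟩) he le_rfl).symm)
  · obtain ⟨rfl, rfl, rfl⟩ : a = last ∧ b = last ∧ e = l := ⟨Fin.ext ha, Fin.ext hb, Fin.ext he⟩
    rfl

theorem pairwise_disjoint_branchSet : Pairwise (Disjoint on branchSet m c) := by
  rintro (_ | ⟨j, d⟩) (_ | ⟨j', d'⟩) hne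
  · exact absurd rfl hne
  all_goals
    rw [onFun, Set.disjoint_left]
    rintro ⟨a, b, e⟩ hx hx'
    simp only [branchSet, Set.mem_union, Set.mem_ofPred_eq, Fin.lt_def, Fin.le_def, Fin.ext_iff,
      ne_eq, Option.some.injEq, Prod.mk.injEq] at hx hx' hne
    omega

theorem exists_adj_branchSet_some_some {j j' : Fin m} (d d' : Fin c) (hj : j' ≤ j)
    (hcorner : ¬(j'.val = m - 1 ∧ d'.val = c - 1)) :
    ∃ x ∈ branchSet m c (some (j, d)), ∃ y ∈ branchSet m c (some (j', d')),
      (hardwareGraph m c).Adj x y :=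
  ⟨(j, j', ⟨c + d, by omega⟩), Or.inr ⟨rfl, hj, rfl⟩, (j, j', ⟨d', by omega⟩),
    Or.inl ⟨rfl, hj, rfl, hcorner⟩, (adj_left_right (by simp) (by simp)).symm⟩

theorem exists_adj_branchSet_some_none (j : Fin m) (d : Fin c) :
    ∃ x ∈ branchSet m c (some (j, d)), ∃ y ∈ branchSet m c none, (hardwareGraph m c).Adj x y := by
  have hx : ((j, j, ⟨c + d, by omega⟩) : Fin m × Fin m × Fin (2 * c)) ∈
      branchSet m c (some (j, d)) := Or.inr ⟨rfl, le_rfl, rfl⟩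
  by_cases hj : j.val + 1 < m
  · exact ⟨_, hx, (j, ⟨j + 1, hj⟩, ⟨c + d, by omega⟩),
      Or.inl (Fin.lt_def.mpr (Nat.lt_succ_self _)), adj_right (by simp) rfl⟩
  · have hlast : j.val = m - 1 := by have := j.isLt; omega
    have := d.isLt
    exact ⟨_, hx, (j, j, ⟨c - 1, by omega⟩), Or.inr ⟨hlast, hlast, rfl⟩,
      (adj_left_right (by simp; omega) (by simp)).symm⟩

theorem pairwise_exists_adj_branchSet :
    Pairwise fun i i' => ∃ x ∈ branchSet m c i, ∃ y ∈ branchSet m c i',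
      (hardwareGraph m c).Adj x y := by
  have swap : ∀ {s t : Set (Fin m × Fin m × Fin (2 * c))},
      (∃ x ∈ s, ∃ y ∈ t, (hardwareGraph m c).Adj x y) →
        ∃ x ∈ t, ∃ y ∈ s, (hardwareGraph m c).Adj x y :=
    fun ⟨x, hx, y, hy, hxy⟩ => ⟨y, hy, x, hx, hxy.symm⟩
  rintro (_ | ⟨j, d⟩) (_ | ⟨j', d'⟩) hne
  · exact absurd rfl hne
  · exact swap (exists_adj_branchSet_some_none j' d')
  · exact exists_adj_branchSet_some_none j d
  wlog hj : j' ≤ j generalizing j j' d d'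
  · exact swap (this j' d' j d hne.symm (le_of_not_ge hj))
  by_cases hcorner : j'.val = m - 1 ∧ d'.val = c - 1
  · -- the corner's left arm is empty, so `(j, d)` lends its left arm instead
    have hjj' : j = j' := Fin.ext (by omega)
    subst hjj'
    have hdd' : d ≠ d' := fun h => hne (h ▸ rfl)
    exact swap (exists_adj_branchSet_some_some d' d le_rfl fun h => hdd' (Fin.ext (by omega)))
  · exact exists_adj_branchSet_some_some d d' hj hcorner

theorem isCliqueModel_branchSet (hm : 1 ≤ m) (hc : 1 ≤ c) :
    IsCliqueModel (hardwareGraph m c) (branchSet m c) where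
  connected
    | none => connected_induce_branchSet_none hm hc
    | some (j, d) => connected_induce_branchSet_some j d
  disjoint := pairwise_disjoint_branchSet
  exists_adj := pairwise_exists_adj_branchSet

end hardwareGraph

/-- For every `m ≥ 1` and `c ≥ 1`, the complete graph `K_{cm+1}` is a minor of
the hardware graph `F(m, c)`. -/
theorem isMinor_clique_hardwareGraph (m c : ℕ) (hm : 1 ≤ m) (hc : 1 ≤ c) :
    IsMinor (⊤ : SimpleGraph (Fin (c * m + 1))) (hardwareGraph m c) :=
  (hardwareGraph.isCliqueModel_branchSet hm hc).isMinor_top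
    (Fintype.equivOfCardEq (by simp [mul_comm])).toEmbedding
end

section
/- For every c ≥ 1, the complete graph K_{c+2} is not a minor of the complete bipartite graph K_{c,c}; hence K_{c+1} is the largest complete-graph minor of a single K_{c,c} cell. In particular, K_6 is not a minor of K_{4,4}. -/
open SimpleGraph

/-!
In a minor model of `K_n` the branch sets are disjoint and nonempty, and the singleton branch
sets must be pairwise adjacent, so their vertices form a clique. In a `k`-colourable host graph
at most `k` branch sets are singletons and the other `n - k` have at least two vertices, so the
host has at least `2n - k` vertices. Since `K_{c,c}` is 2-colourable with `2c` vertices,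
`2n ≤ 2c + 2`.
-/

open Finset Function

namespace SimpleGraph

variable {V W : Type} {G : SimpleGraph W} {k : ℕ}

lemma isClique_biUnion_of_card_le_one [DecidableEq W] {f : V → Finset W}
    (hadj : Pairwise fun u v => ∃ a ∈ f u, ∃ b ∈ f v, G.Adj a b) {s : Finset V}
    (hs : ∀ v ∈ s, #(f v) ≤ 1) : G.IsClique (s.biUnion f : Set W) := by
  intro a ha b hb hab
  simp only [coe_biUnion, mem_coe, Set.mem_iUnion, exists_prop] at ha hb
  obtain ⟨u, hu, hau⟩ := ha
  obtain ⟨v, hv, hbv⟩ := hb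
  obtain rfl | huv := eq_or_ne u v
  · exact absurd (card_le_one.1 (hs u hu) a hau b hbv) hab
  obtain ⟨a', ha', b', hb', ha'b'⟩ := hadj huv
  rwa [card_le_one.1 (hs u hu) a hau a' ha', card_le_one.1 (hs v hv) b hbv b' hb']

variable [Fintype V] [Fintype W]

lemma two_mul_card_le_of_pairwise_disjoint [DecidableEq W] {f : V → Finset W}
    (hne : ∀ v, (f v).Nonempty) (hdisj : Pairwise (Disjoint on f))
    (hsmall : #{v | #(f v) ≤ 1} ≤ k) : 2 * Fintype.card V ≤ Fintype.card W + k := by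
  calc 2 * Fintype.card V = ∑ _v : V, 2 := by simp [mul_comm]
    _ ≤ ∑ v, (#(f v) + if #(f v) ≤ 1 then 1 else 0) := by
        refine sum_le_sum fun v _ => ?_
        have := (hne v).card_pos
        split_ifs <;> omega
    _ = #(univ.biUnion f) + #{v | #(f v) ≤ 1} := by
        rw [sum_add_distrib, card_biUnion (hdisj.set_pairwise _), card_filter]
    _ ≤ Fintype.card W + k := add_le_add (card_le_univ _) hsmall

theorem two_mul_card_le_of_isMinor_top (hG : G.Colorable k)
    (h : IsMinor (⊤ : SimpleGraph V) G) : 2 * Fintype.card V ≤ Fintype.card W + k := by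
  classical
  obtain ⟨φ, hconn, hdisj, hadj⟩ := h
  let f : V → Finset W := fun v => (φ v).toFinset
  have hne : ∀ v, (f v).Nonempty := fun v =>
    let ⟨⟨a, ha⟩⟩ := (hconn v).nonempty
    ⟨a, Set.mem_toFinset.2 ha⟩
  have hdisj' : Pairwise (Disjoint on f) := fun u v huv =>
    Set.disjoint_toFinset.2 (hdisj u v huv)
  have hadj' : Pairwise fun u v => ∃ a ∈ f u, ∃ b ∈ f v, G.Adj a b := fun u v huv => by
    simpa [f] using hadj u v ((top_adj u v).2 huv)
  refine two_mul_card_le_of_pairwise_disjoint hne hdisj' ?_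
  calc #{v | #(f v) ≤ 1} ≤ #((univ.filter fun v => #(f v) ≤ 1).biUnion f) :=
        card_le_card_biUnion (hdisj'.set_pairwise _) fun v _ => hne v
    _ ≤ k := (isClique_biUnion_of_card_le_one hadj' fun v hv =>
        (mem_filter.1 hv).2).card_le_of_colorable hG

theorem two_mul_card_le_of_isMinor_top_completeBipartiteGraph {α β : Type}
    [Fintype α] [Fintype β]
    (h : IsMinor (⊤ : SimpleGraph V) (completeBipartiteGraph α β)) :
    2 * Fintype.card V ≤ Fintype.card α + Fintype.card β + 2 := by
  simpa using two_mul_card_le_of_isMinor_top (CompleteBipartiteGraph.bicoloring α β).colorable h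

end SimpleGraph

/-- For every `c ≥ 1`, `K_{c+2}` is not a minor of `K_{c,c}`; hence `K_{c+1}`
is the largest complete-graph minor of a single `K_{c,c}` cell.  In
particular, `K_6` is not a minor of `K_{4,4}`. -/
theorem not_isMinor_bigClique_completeBipartite :
    (∀ c : ℕ, 1 ≤ c →
      ¬ IsMinor (⊤ : SimpleGraph (Fin (c + 2)))
          (completeBipartiteGraph (Fin c) (Fin c)) ∧
      (∀ n : ℕ, IsMinor (⊤ : SimpleGraph (Fin n))
          (completeBipartiteGraph (Fin c) (Fin c)) → n ≤ c + 1)) ∧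
    ¬ IsMinor (⊤ : SimpleGraph (Fin 6))
        (completeBipartiteGraph (Fin 4) (Fin 4)) := by
  refine ⟨fun c _ => ⟨fun h => ?_, fun n h => ?_⟩, fun h => ?_⟩ <;>
  · have := two_mul_card_le_of_isMinor_top_completeBipartiteGraph h
    simp only [Fintype.card_fin] at this
    omega
end
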